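/- arXiv:1404.1822 — 14 statements merged into one kernel-verified Lean document; each statement's English description precedes it below -/
import Mathlib

section
/- Let q be an odd prime power and p = char F_q. Then in F_p[x], the identity ∑_{0 ≤ l ≤ q/2} C(-l, l) x^l = (1/2)[1 + (1+4x)^{(q-1)/2}] holds, where C(-l, l) denotes the generalized binomial coefficient (-l)(-l-1)⋯(-2l+1)/l!. -/
/-!
Put `q = 2m + 1`. Over `𝔽_p`, Frobenius gives `(1 + 4X)^(2m) · (1 + 4X) = 1 + 4X^q`, so
`(1 + 4X)^m` is a square root of `(1 + 4X)⁻¹` modulo `X^q`. So is the central binomial series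
`g = ∑ (-1)^l C(2l, l) X^l`, whose square is `∑ (-4)^l X^l` by the Chu–Vandermonde identity
for `C(-1/2, ·)`. Both square roots have constant term `1`, so their sum is a unit and they
agree modulo `X^q`: the coefficients of `(1 + 4X)^m` are `(-1)^l C(2l, l)`. Finally
`C(2l, l) = 2 C(2l - 1, l)` for `l ≥ 1`.
-/

open Polynomial Finset

theorem Ring.choose_neg_one {R : Type*} [Ring R] [BinomialRing R] (k : ℕ) :
    Ring.choose (-1 : R) k = (-1) ^ k := by
  rw [Ring.choose_neg, add_sub_cancel_left, Ring.choose_natCast, Nat.choose_self, Nat.cast_one,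
    Units.smul_def, zsmul_one, Int.coe_negOnePow_natCast]
  push_cast
  rfl

theorem descPochhammer_smeval_neg_half {K : Type*} [Field K] [CharZero K] (k : ℕ) :
    (descPochhammer ℤ k).smeval (-2⁻¹ : K) = k.centralBinom * k.factorial / (-4) ^ k := by
  induction k with
  | zero => simp
  | succ k ih =>
    have h : ((k + 1 : ℕ) : K) * (k + 1).centralBinom = 2 * (2 * k + 1) * k.centralBinom := by
      exact_mod_cast Nat.succ_mul_centralBinom_succ k
    have hk : (k.factorial : K) ≠ 0 := Nat.cast_ne_zero.mpr k.factorial_ne_zero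
    rw [descPochhammer_succ_right, smeval_mul, ih, smeval_sub, smeval_X, smeval_natCast,
      pow_one, pow_zero, nsmul_one, Nat.factorial_succ]
    push_cast at h ⊢
    field_simp
    linear_combination -2 * (-4) ^ k * h

theorem Ring.choose_neg_half {K : Type*} [Field K] [CharZero K] (k : ℕ) :
    Ring.choose (-2⁻¹ : K) k = k.centralBinom / (-4) ^ k := by
  rw [Ring.choose_eq_smul, descPochhammer_smeval_neg_half, smul_eq_mul]
  have hk : (k.factorial : K) ≠ 0 := Nat.cast_ne_zero.mpr k.factorial_ne_zero
  field_simp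

theorem Nat.sum_antidiagonal_centralBinom_mul (n : ℕ) :
    ∑ ij ∈ antidiagonal n, ij.1.centralBinom * ij.2.centralBinom = 4 ^ n := by
  have h := Ring.add_choose_eq (r := (-2⁻¹ : ℚ)) (s := -2⁻¹) n (Commute.all _ _)
  rw [show (-2⁻¹ : ℚ) + -2⁻¹ = -1 by norm_num, Ring.choose_neg_one] at h
  have hterm : ∀ ij ∈ antidiagonal n,
      Ring.choose (-2⁻¹ : ℚ) ij.1 * Ring.choose (-2⁻¹) ij.2 =
      (ij.1.centralBinom * ij.2.centralBinom : ℕ) / (-4) ^ n := by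
    intro ij hij
    rw [Ring.choose_neg_half, Ring.choose_neg_half, ← mem_antidiagonal.mp hij, pow_add]
    push_cast
    ring
  rw [sum_congr rfl hterm, ← sum_div, eq_div_iff (by norm_num), ← mul_pow] at h
  norm_num at h
  exact_mod_cast h.symm

theorem Nat.two_mul_choose_two_mul_sub_one {k : ℕ} (hk : k ≠ 0) :
    2 * (2 * k - 1).choose k = k.centralBinom := by
  obtain ⟨j, rfl⟩ := Nat.exists_eq_add_one_of_ne_zero hk
  rw [show 2 * (j + 1) - 1 = 2 * j + 1 by omega, Nat.centralBinom,
    show 2 * (j + 1) = 2 * j + 1 + 1 by ring, Nat.choose_succ_succ (2 * j + 1) j,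
    Nat.choose_symm_half]
  ring

theorem Polynomial.C_two_mul_sum_range_choose_two_mul_sub_one {R : Type*} [CommRing R]
    (m : ℕ) :
    C 2 * ∑ l ∈ range (m + 1),
        C ((((-1) ^ l * ((2 * l - 1).choose l : ℤ) : ℤ) : R)) * X ^ l =
      1 + ∑ l ∈ range (m + 1), C ((-1) ^ l * (l.centralBinom : R)) * X ^ l := by
  have hterm (l : ℕ) :
      (2 : R) * (((-1) ^ (l + 1) * ((2 * (l + 1) - 1).choose (l + 1) : ℤ) : ℤ) : R) =
        (-1) ^ (l + 1) * ((l + 1).centralBinom : R) := by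
    rw [← Nat.two_mul_choose_two_mul_sub_one l.succ_ne_zero]
    push_cast
    ring
  rw [mul_sum, sum_range_succ', sum_range_succ', add_left_comm]
  congr 1
  · exact sum_congr rfl fun l _ => by rw [← mul_assoc, ← C_mul, hterm]
  · simp
    exact (map_ofNat C 2).trans one_add_one_eq_two.symm

namespace PowerSeries

variable {R : Type*} [CommRing R]

theorem coeff_eq_of_X_pow_dvd_sq_sub_sq {f g : R⟦X⟧} {n l : ℕ}
    (hunit : IsUnit (constantCoeff (f + g))) (hdvd : X ^ n ∣ f ^ 2 - g ^ 2) (hl : l < n) :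
    coeff l f = coeff l g := by
  have hdvd' : X ^ n ∣ f - g := by
    rw [sq_sub_sq, mul_comm] at hdvd
    exact (isUnit_iff_constantCoeff.mpr hunit).dvd_mul_right.mp hdvd
  exact sub_eq_zero.mp (by rw [← map_sub]; exact X_pow_dvd_iff.mp hdvd' l hl)

variable (R) in
/-- The expansion of `(1 + 4X)^(-1/2)`. -/
noncomputable def centralBinomSeries : R⟦X⟧ :=
  mk fun l => (-1) ^ l * (l.centralBinom : R)

theorem centralBinomSeries_sq : centralBinomSeries R ^ 2 = mk fun n => (-4 : R) ^ n := by
  ext n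
  rw [sq, coeff_mul, coeff_mk]
  have hterm : ∀ ij ∈ antidiagonal n,
      coeff ij.1 (centralBinomSeries R) * coeff ij.2 (centralBinomSeries R) =
        (-1) ^ n * ((ij.1.centralBinom * ij.2.centralBinom : ℕ) : R) := by
    intro ij hij
    rw [centralBinomSeries, coeff_mk, coeff_mk, ← mem_antidiagonal.mp hij, pow_add]
    push_cast
    ring
  rw [sum_congr rfl hterm, ← mul_sum, ← Nat.cast_sum, Nat.sum_antidiagonal_centralBinom_mul,
    Nat.cast_pow, ← mul_pow]
  norm_num

theorem one_add_four_mul_X_mul_centralBinomSeries_sq :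
    (1 + 4 * X) * centralBinomSeries R ^ 2 = 1 := by
  ext n
  rw [centralBinomSeries_sq, add_mul, one_mul, mul_assoc, map_add]
  cases n with
  | zero => simp
  | succ n =>
    rw [← map_ofNat C 4, coeff_C_mul, coeff_succ_X_mul, coeff_mk, coeff_mk, coeff_one,
      if_neg n.succ_ne_zero, pow_succ]
    ring

end PowerSeries

theorem Polynomial.coe_one_add_four_mul_X_pow {R : Type*} [CommRing R] (k : ℕ) :
    ((1 + 4 * X ^ k : R[X]) : PowerSeries R) = 1 + 4 * PowerSeries.X ^ k := by
  rw [← map_ofNat C 4, coe_add, coe_one, coe_mul, coe_C, Polynomial.coe_pow, coe_X, map_ofNat]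

namespace ZMod

variable {p : ℕ} [Fact p.Prime]

theorem one_add_four_mul_X_pow_char_pow (n : ℕ) :
    (1 + 4 * X : (ZMod p)[X]) ^ p ^ n = 1 + 4 * X ^ p ^ n := by
  rw [add_pow_char_pow, one_pow, mul_pow, ← map_ofNat C 4, ← map_pow, ZMod.pow_card_pow]

theorem coeff_one_add_four_mul_X_pow (hp : p ≠ 2) {n m : ℕ} (hm : p ^ n = 2 * m + 1) {l : ℕ}
    (hl : l ≤ m) :
    ((1 + 4 * X : (ZMod p)[X]) ^ m).coeff l = (-1) ^ l * (l.centralBinom : ZMod p) := by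
  set f : PowerSeries (ZMod p) := ↑((1 + 4 * X : (ZMod p)[X]) ^ m)
  set g := PowerSeries.centralBinomSeries (ZMod p)
  have hunit : IsUnit (PowerSeries.constantCoeff (f + g)) := by
    simpa [f, g, PowerSeries.centralBinomSeries, one_add_one_eq_two]
      using Ring.two_ne_zero (by rwa [ZMod.ringChar_zmod_n])
  have hf : f ^ 2 * (1 + 4 * PowerSeries.X ^ 1) = 1 + 4 * PowerSeries.X ^ p ^ n := by
    rw [← coe_one_add_four_mul_X_pow, ← coe_one_add_four_mul_X_pow, ← Polynomial.coe_pow,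
      ← Polynomial.coe_mul, ← pow_mul, pow_one, ← pow_succ, mul_comm m 2, ← hm,
      one_add_four_mul_X_pow_char_pow]
  have hdvd : PowerSeries.X ^ p ^ n ∣ f ^ 2 - g ^ 2 := by
    refine ⟨4 * g ^ 2, ?_⟩
    linear_combination g ^ 2 * hf -
      f ^ 2 * PowerSeries.one_add_four_mul_X_mul_centralBinomSeries_sq (R := ZMod p)
  rw [← coeff_coe, PowerSeries.coeff_eq_of_X_pow_dvd_sq_sub_sq hunit hdvd (by omega)]
  exact PowerSeries.coeff_mk _ _

theorem one_add_four_mul_X_pow_eq_sum (hp : p ≠ 2) {n m : ℕ} (hm : p ^ n = 2 * m + 1) :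
    (1 + 4 * X : (ZMod p)[X]) ^ m =
      ∑ l ∈ range (m + 1), C ((-1) ^ l * (l.centralBinom : ZMod p)) * X ^ l := by
  have hdeg : ((1 + 4 * X : (ZMod p)[X]) ^ m).natDegree < m + 1 :=
    Nat.lt_succ_of_le <| by
      simpa using natDegree_pow_le_of_le m (show (1 + 4 * X : (ZMod p)[X]).natDegree ≤ 1 by
        compute_degree)
  rw [as_sum_range_C_mul_X_pow' _ hdeg]
  refine sum_congr rfl fun l hl => ?_
  rw [coeff_one_add_four_mul_X_pow hp hm (Nat.lt_succ_iff.mp (mem_range.mp hl))]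

end ZMod

/-- For odd prime power `q = pⁿ`, in `F_p[x]` we have
`∑_{0 ≤ l ≤ q/2} C(-l, l) xˡ = (1/2)[1 + (1+4x)^((q-1)/2)]`,
where `C(-l, l) = (-1)ˡ · C(2l-1, l)` is the generalized binomial coefficient. -/
theorem stmt_1 (p n q : ℕ) (hp : p.Prime) (hn : 0 < n) (hq : q = p ^ n)
    (hodd : Odd q) :
    ∑ l ∈ Finset.range (q / 2 + 1),
        C ((((-1) ^ l * ((2 * l - 1).choose l : ℤ) : ℤ) : ZMod p)) * X ^ l
      = C ((2 : ZMod p)⁻¹) * (1 + (1 + 4 * X : (ZMod p)[X]) ^ ((q - 1) / 2)) := by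
  have : Fact p.Prime := ⟨hp⟩
  obtain ⟨m, hm⟩ := hodd
  have hp2 : p ≠ 2 := by
    rintro rfl
    have : 2 ∣ q := hq ▸ dvd_pow_self 2 hn.ne'
    omega
  have h2 : (2 : ZMod p) ≠ 0 := Ring.two_ne_zero (by rwa [ZMod.ringChar_zmod_n])
  rw [show q / 2 = m by omega, show (q - 1) / 2 = m by omega,
    ZMod.one_add_four_mul_X_pow_eq_sum hp2 (hq ▸ hm),
    ← C_two_mul_sum_range_choose_two_mul_sub_one, ← mul_assoc, ← C_mul, inv_mul_cancel₀ h2,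
    C_1, one_mul]
end

section
/- Let q be a prime power, p = char F_q, and let z be transcendental over F_p. Write x^2 + x - z = (x - r_1)(x - r_2) with r_1, r_2 in an algebraic closure of F_p(z). Then ∑_{0 ≤ l ≤ q/2} C(-l, l) z^l = -(r_1^{q+1} - r_2^{q+1})/(r_1 - r_2). -/
/-!
Modulo `p`, `C(-l, l) = (-1)ˡ C(2l - 1, l)` agrees with `C(q - l, l)` for `l < q`, and
`C(q - l, l) = 0` for `l > q / 2`, so the left-hand side is the Fibonacci polynomial
`∑ₗ C(q - l, l) zˡ`. Binet's formula for the roots `-r₁, -r₂` of `x² - x - z`, together with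
`(-1)^(q+1) = 1` in characteristic `p`, turns it into the right-hand side.
-/

open Finset

section FibPoly

variable {R : Type*} [CommRing R]

/-- The Fibonacci polynomial `F_{m+1}` evaluated at `z`, so that `fibPoly 1 m = fib (m + 1)`. -/
noncomputable def fibPoly (z : R) (m : ℕ) : R :=
  ∑ k ∈ range (m + 1), ((m - k).choose k : R) * z ^ k

@[simp]
lemma fibPoly_zero (z : R) : fibPoly z 0 = 1 := by
  simp [fibPoly]

@[simp]
lemma fibPoly_one (z : R) : fibPoly z 1 = 1 := by
  simp [fibPoly, sum_range_succ]

lemma fibPoly_add_two (z : R) (m : ℕ) :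
    fibPoly z (m + 2) = fibPoly z (m + 1) + z * fibPoly z m := by
  have pascal : ∀ k ∈ range (m + 1),
      ((m + 2 - (k + 1)).choose (k + 1) : R) * z ^ (k + 1)
        = ((m + 1 - (k + 1)).choose (k + 1) : R) * z ^ (k + 1)
          + z * (((m - k).choose k : R) * z ^ k) := by
    intro k hk
    rw [show m + 2 - (k + 1) = m - k + 1 by grind, show m + 1 - (k + 1) = m - k by omega,
      Nat.choose_succ_succ, Nat.cast_add]
    ring
  rw [fibPoly, sum_range_succ', sum_range_succ, Nat.choose_eq_zero_of_lt (by omega),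
    sum_congr rfl pascal, sum_add_distrib, fibPoly, fibPoly, mul_sum, sum_range_succ' _ (m + 1)]
  simp only [Nat.reduceSubDiff, Nat.cast_zero, zero_mul, add_zero, tsub_zero,
    Nat.choose_zero_right, Nat.cast_one, pow_zero, mul_one]
  ring

/-- Binet's formula, `a` and `b` being the roots of `x² - x - z`. -/
lemma sub_mul_fibPoly {z a b : R} (hsum : a + b = 1) (hprod : a * b = -z) (m : ℕ) :
    (a - b) * fibPoly z m = a ^ (m + 1) - b ^ (m + 1) := by
  induction m using Nat.twoStepInduction with
  | zero => simp
  | one => simpa using by linear_combination (b - a) * hsum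
  | more m ih₀ ih₁ =>
    rw [fibPoly_add_two]
    linear_combination ih₁ + z * ih₀ - (a ^ (m + 2) - b ^ (m + 2)) * hsum
      + (a ^ (m + 1) - b ^ (m + 1)) * hprod

lemma sum_range_half_eq_fibPoly (z : R) (m : ℕ) :
    ∑ k ∈ range (m / 2 + 1), ((m - k).choose k : R) * z ^ k = fibPoly z m := by
  refine sum_subset (fun k hk ↦ by grind) fun k hk hk' ↦ ?_
  rw [Nat.choose_eq_zero_of_lt (by grind), Nat.cast_zero, zero_mul]

end FibPoly

section PowerSeries

open PowerSeries

variable {R : Type*} [CommRing R]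

lemma PowerSeries.coeff_one_sub_X_pow (m k : ℕ) :
    coeff k ((1 - X : R⟦X⟧) ^ m) = (-1) ^ k * m.choose k := by
  have : (1 - X : R⟦X⟧) ^ m = rescale (-1) ((1 + Polynomial.X) ^ m : Polynomial R) := by
    simp [sub_eq_add_neg]
  rw [this, coeff_rescale, Polynomial.coeff_coe, Polynomial.coeff_one_add_X_pow]

/-- Compare the coefficients of `Xᵏ` in `(1 - X)^(pⁿ - k) = (1 - X^(pⁿ)) (1 - X)⁻ᵏ`. -/
theorem cast_choose_prime_pow_sub (p : ℕ) [Fact p.Prime] [CharP R p] {n k : ℕ} (hk : k < p ^ n) :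
    ((p ^ n - k).choose k : R) = (-1) ^ k * ((2 * k - 1).choose k : ℕ) := by
  obtain rfl | ⟨d, rfl⟩ : k = 0 ∨ ∃ d, k = d + 1 := by cases k <;> simp
  · simp
  have : CharP R⟦X⟧ p := charP_of_injective_ringHom C_injective p
  have key :
      (1 - X : R⟦X⟧) ^ (p ^ n - (d + 1)) = (1 - X ^ p ^ n) * (invOneSubPow R (d + 1)).val :=
    calc (1 - X : R⟦X⟧) ^ (p ^ n - (d + 1))
        = (1 - X) ^ (p ^ n - (d + 1)) * ((1 - X) ^ (d + 1) * (invOneSubPow R (d + 1)).val) := by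
          rw [← invOneSubPow_inv_eq_one_sub_pow R (d + 1), Units.inv_val, mul_one]
      _ = (1 - X) ^ p ^ n * (invOneSubPow R (d + 1)).val := by
          rw [← mul_assoc, ← pow_add, Nat.sub_add_cancel hk.le]
      _ = (1 - X ^ p ^ n) * (invOneSubPow R (d + 1)).val := by
          rw [sub_pow_char_pow, one_pow]
  have hcoeff := congrArg (coeff (d + 1)) key
  rw [coeff_one_sub_X_pow, sub_mul, one_mul, map_sub, coeff_X_pow_mul', if_neg (by omega),
    sub_zero, invOneSubPow_val_succ_eq_mk_add_choose, coeff_mk] at hcoeff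
  rw [show 2 * (d + 1) - 1 = 2 * d + 1 by omega, Nat.choose_symm_half, two_mul, add_assoc,
    ← hcoeff, ← mul_assoc, ← pow_add, Even.neg_one_pow ⟨_, rfl⟩, one_mul]

end PowerSeries

theorem stmt_3_general (p n q : ℕ) [Fact p.Prime] (hq : q = p ^ n)
    (z r₁ r₂ : AlgebraicClosure (RatFunc (ZMod p)))
    (hsum : r₁ + r₂ = -1) (hprod : r₁ * r₂ = -z) (hne : r₁ ≠ r₂) :
    ∑ l ∈ Finset.range (q / 2 + 1),
        ((((-1) ^ l * ((2 * l - 1).choose l : ℤ) : ℤ) :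
            AlgebraicClosure (RatFunc (ZMod p))) * z ^ l)
      = -((r₁ ^ (q + 1) - r₂ ^ (q + 1)) / (r₁ - r₂)) := by
  have hq_pos : 0 < q := hq ▸ pow_pos (Fact.out : p.Prime).pos n
  have hterm : ∀ l ∈ range (q / 2 + 1),
      ((((-1) ^ l * ((2 * l - 1).choose l : ℤ) : ℤ) : AlgebraicClosure (RatFunc (ZMod p))) * z ^ l)
        = ((q - l).choose l : AlgebraicClosure (RatFunc (ZMod p))) * z ^ l := by
    intro l hl
    push_cast
    rw [hq, cast_choose_prime_pow_sub p (by grind)]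
  have hneg_one : (-1 : AlgebraicClosure (RatFunc (ZMod p))) ^ (q + 1) = 1 := by
    rw [pow_succ, hq, neg_one_pow_char_pow, neg_one_mul, neg_neg]
  have binet := sub_mul_fibPoly (z := z) (a := -r₁) (b := -r₂) (by linear_combination -hsum)
    (by linear_combination hprod) q
  rw [neg_pow, neg_pow r₂, hneg_one, one_mul, one_mul, neg_sub_neg] at binet
  rw [sum_congr rfl hterm, sum_range_half_eq_fibPoly, ← binet, ← neg_sub, neg_mul, neg_div,
    neg_neg, mul_div_cancel_left₀ _ (sub_ne_zero.mpr hne)]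

/-- Let `q = pⁿ` and `z` transcendental over `F_p` (realized as the image of `X`
in the algebraic closure of the rational function field `F_p(z)`). If
`x² + x - z = (x - r₁)(x - r₂)`, i.e. `r₁ + r₂ = -1` and `r₁ r₂ = -z`, then
`∑_{0 ≤ l ≤ q/2} C(-l, l) zˡ = -(r₁^(q+1) - r₂^(q+1))/(r₁ - r₂)`. -/
theorem stmt_3 (p n q : ℕ) [Fact p.Prime] (hn : 0 < n) (hq : q = p ^ n)
    (z r₁ r₂ : AlgebraicClosure (RatFunc (ZMod p)))
    (hz : z = algebraMap (RatFunc (ZMod p)) (AlgebraicClosure (RatFunc (ZMod p))) RatFunc.X)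
    (hsum : r₁ + r₂ = -1) (hprod : r₁ * r₂ = -z) (hne : r₁ ≠ r₂) :
    ∑ l ∈ Finset.range (q / 2 + 1),
        ((((-1) ^ l * ((2 * l - 1).choose l : ℤ) : ℤ) :
            AlgebraicClosure (RatFunc (ZMod p))) * z ^ l)
      = -((r₁ ^ (q + 1) - r₂ ^ (q + 1)) / (r₁ - r₂)) :=
  stmt_3_general p n q hq z r₁ r₂ hsum hprod hne
end

section
/- Let q be a prime power and let b ∈ F_{q^2}^*, a = 0. Then f(x) = b x^q + x^{2q-1} is not a permutation polynomial of F_{q^2}; in fact ∑_{x ∈ F_{q^2}} f(x)^{q-1} = b^{q-2} ≠ 0. -/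
/-!
Since `2q - 1 = q + (q - 1)`, we have `f(x) = x^q (x^(q-1) + b)`, so the binomial theorem gives
`f(x)^(q-1) = ∑_{j<q} C(q-1, j) b^(q-1-j) x^((q+j)(q-1))`. Summing over `F_{q²}`, the power sum
`∑ x^e` (with `e ≠ 0`) is `-1` when `q² - 1 ∣ e` and `0` otherwise, and
`(q+1)(q-1) ∣ (q+j)(q-1)` with `j < q` forces `j = 1`. Only `C(q-1, 1) b^(q-2) (-1) = b^(q-2)`
survives, as `q = 0` in `F_{q²}`. A permutation would instead give `∑ y^(q-1) = 0`, because
`q - 1 < q² - 1`.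
-/

open Finset

theorem Nat.sq_sub_one_dvd_add_mul_sub_one_iff {q j : ℕ} (hq : 2 ≤ q) (hj : j < q) :
    q ^ 2 - 1 ∣ (q + j) * (q - 1) ↔ j = 1 := by
  rw [show q ^ 2 - 1 = (q + 1) * (q - 1) by simpa using Nat.sq_sub_sq q 1,
    Nat.mul_dvd_mul_iff_right (by omega)]
  constructor
  · rintro ⟨c, hc⟩
    rcases c with _ | _ | c
    · omega
    · omega
    · nlinarith
  · rintro rfl
    exact dvd_rfl

theorem mul_pow_add_pow_two_mul_sub_one_pow_eq_sum {R : Type*} [CommSemiring R] {q : ℕ}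
    (hq : 1 ≤ q) (b x : R) :
    (b * x ^ q + x ^ (2 * q - 1)) ^ (q - 1) =
      ∑ j ∈ range q, ((q - 1).choose j * b ^ (q - 1 - j)) * x ^ ((q + j) * (q - 1)) := by
  have hfactor : b * x ^ q + x ^ (2 * q - 1) = x ^ q * (x ^ (q - 1) + b) := by
    rw [show 2 * q - 1 = q + (q - 1) by omega, pow_add]
    ring
  rw [hfactor, mul_pow, add_pow, Nat.sub_add_cancel hq, mul_sum]
  refine sum_congr rfl fun j _ ↦ ?_
  rw [add_mul, pow_add, pow_mul, mul_comm j, pow_mul]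
  ring

namespace FiniteField

variable {K : Type*} [Field K] [Fintype K]

theorem sum_pow_eq_ite {i : ℕ} (hi : i ≠ 0) :
    ∑ x : K, x ^ i = if Fintype.card K - 1 ∣ i then -1 else 0 := by
  classical
  let φ : Kˣ ↪ K := ⟨fun x ↦ x, Units.val_injective⟩
  have hφ : univ.map φ = univ \ {0} := by
    ext x
    simpa only [mem_map, mem_univ, Function.Embedding.coeFn_mk, true_and, mem_sdiff,
      mem_singleton, φ] using! isUnit_iff_ne_zero
  calc
    ∑ x : K, x ^ i = ∑ x ∈ univ \ {(0 : K)}, x ^ i := by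
      rw [← sum_sdiff ({0} : Finset K).subset_univ, sum_singleton, zero_pow hi, add_zero]
    _ = ∑ x : Kˣ, (x ^ i : K) := by simp [φ, ← hφ, univ.sum_map φ]
    _ = _ := sum_pow_units K i

section CardEqSq

variable {q : ℕ} (hcard : Fintype.card K = q ^ 2)
include hcard

theorem two_le_of_card_eq_sq : 2 ≤ q := by
  have h := Fintype.one_lt_card (α := K)
  by_contra! hq
  interval_cases q <;> simp_all

theorem natCast_eq_zero_of_card_eq_sq : (q : K) = 0 := by
  have h := cast_card_eq_zero K
  rw [hcard, Nat.cast_pow] at h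
  exact pow_eq_zero_iff two_ne_zero |>.mp h

theorem sum_pow_add_mul_sub_one {j : ℕ} (hj : j < q) :
    ∑ x : K, x ^ ((q + j) * (q - 1)) = if j = 1 then -1 else 0 := by
  have hq := two_le_of_card_eq_sq hcard
  rw [sum_pow_eq_ite (Nat.mul_ne_zero (by omega) (by omega)), hcard]
  exact if_congr (Nat.sq_sub_one_dvd_add_mul_sub_one_iff hq hj) rfl rfl

theorem sum_mul_pow_add_pow_two_mul_sub_one_pow (b : K) :
    ∑ x : K, (b * x ^ q + x ^ (2 * q - 1)) ^ (q - 1) = b ^ (q - 2) := by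
  have hq := two_le_of_card_eq_sq hcard
  calc ∑ x : K, (b * x ^ q + x ^ (2 * q - 1)) ^ (q - 1)
      = ∑ j ∈ range q, ((q - 1).choose j * b ^ (q - 1 - j)) *
          ∑ x : K, x ^ ((q + j) * (q - 1)) := by
        simp_rw [mul_pow_add_pow_two_mul_sub_one_pow_eq_sum (by omega : 1 ≤ q), mul_sum]
        exact sum_comm
    _ = ∑ j ∈ range q, ((q - 1).choose j * b ^ (q - 1 - j)) * if j = 1 then -1 else 0 :=
        sum_congr rfl fun j hj ↦ by rw [sum_pow_add_mul_sub_one hcard (mem_range.mp hj)]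
    _ = -((q - 1 : ℕ) * b ^ (q - 2)) := by
        simp [show 1 < q by omega, show q - 1 - 1 = q - 2 by omega]
    _ = b ^ (q - 2) := by
        rw [Nat.cast_sub (by omega), natCast_eq_zero_of_card_eq_sq hcard]
        ring

end CardEqSq

end FiniteField

theorem stmt_4_general (q : ℕ)
    (F : Type*) [Field F] [Fintype F] (hcard : Fintype.card F = q ^ 2)
    (b : F) (hb : b ≠ 0) :
    (∑ x : F, (b * x ^ q + x ^ (2 * q - 1)) ^ (q - 1) = b ^ (q - 2)) ∧
    b ^ (q - 2) ≠ 0 ∧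
    ¬ Function.Bijective (fun x : F => b * x ^ q + x ^ (2 * q - 1)) := by
  have hsum := FiniteField.sum_mul_pow_add_pow_two_mul_sub_one_pow hcard b
  refine ⟨hsum, pow_ne_zero _ hb, fun hbij ↦ pow_ne_zero (q - 2) hb ?_⟩
  have hq := FiniteField.two_le_of_card_eq_sq hcard
  rw [← hsum, Fintype.sum_bijective _ hbij _ (fun y : F ↦ y ^ (q - 1)) fun _ ↦ rfl]
  refine FiniteField.sum_pow_lt_card_sub_one F _ ?_
  rw [hcard]
  exact Nat.sub_lt_sub_right (by omega) (by nlinarith)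

/-- For `b ∈ F_{q²}*`, `f(x) = b x^q + x^(2q-1)` is not a permutation polynomial
of `F_{q²}`: indeed `∑_{x ∈ F_{q²}} f(x)^(q-1) = b^(q-2) ≠ 0`. -/
theorem stmt_4 (p n q : ℕ) (hp : p.Prime) (hn : 0 < n) (hq : q = p ^ n)
    (F : Type*) [Field F] [Fintype F] (hcard : Fintype.card F = q ^ 2)
    (b : F) (hb : b ≠ 0) :
    (∑ x : F, (b * x ^ q + x ^ (2 * q - 1)) ^ (q - 1) = b ^ (q - 2)) ∧
    b ^ (q - 2) ≠ 0 ∧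
    ¬ Function.Bijective (fun x : F => b * x ^ q + x ^ (2 * q - 1)) :=
  stmt_4_general q F hcard b hb
end

section
/- Let q be even and a ∈ F_{q^2}^*. Then f(x) = a x + x^{2q-1} is not a permutation polynomial of F_{q^2}; in fact ∑_{x ∈ F_{q^2}} f(x)^{(q-1)q} = a^{q^2/2 - q} ≠ 0. -/
/-!
In characteristic 2 with `q = 2 ^ n`, Frobenius gives `f(x)^q = x^((2q-1)q) + (a x)^q`, and
`(u + v)^(q-1) = ∑_{j<q} u^j v^(q-1-j)` because every binomial coefficient `C(q-1, j)` is odd.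
Hence `f(x)^((q-1)q) = ∑_{j<q} a^(q(q-1-j)) x^(q(q-1)(2j+1))`. Over `F_{q²}`, `∑_x x^e` is `-1`
when `q² - 1 ∣ e` and `0` otherwise, and `q² - 1 ∣ q(q-1)(2j+1)` iff `q + 1 ∣ 2j + 1`, i.e.
`j = q/2`; only `a^(q(q/2-1)) = a^(q²/2-q)` survives. A permutation `f` would instead give
`∑_y y^((q-1)q) = 0`, since `(q-1)q < q² - 1`.
-/

open Finset

theorem Nat.sq_sub_one_dvd_mul_iff {q : ℕ} (hq : 1 < q) (m : ℕ) :
    q ^ 2 - 1 ∣ q * (q - 1) * m ↔ q + 1 ∣ m := by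
  rw [← one_pow 2, Nat.sq_sub_sq, one_pow, mul_comm (q + 1), mul_comm q, mul_assoc,
    Nat.mul_dvd_mul_iff_left (by omega)]
  exact (Nat.coprime_self_add_left.mpr (Nat.coprime_one_left q)).dvd_mul_left

theorem Nat.add_one_dvd_two_mul_add_one_iff {q j : ℕ} (hq : Even q) (hj : j < q) :
    q + 1 ∣ 2 * j + 1 ↔ j = q / 2 := by
  obtain ⟨k, rfl⟩ := hq
  constructor
  · intro h
    have := Nat.eq_of_dvd_of_lt_two_mul (by omega) h (by omega)
    omega
  · rintro rfl
    rw [show 2 * ((k + k) / 2) + 1 = k + k + 1 by omega]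

theorem add_pow_two_pow_sub_one {R : Type*} [CommRing R] [IsDomain R] [CharP R 2]
    (n : ℕ) (u v : R) :
    (u + v) ^ (2 ^ n - 1) = ∑ i ∈ range (2 ^ n), u ^ i * v ^ (2 ^ n - 1 - i) := by
  rcases eq_or_ne (u + v) 0 with huv | huv
  · obtain rfl : u = v := by rwa [← CharTwo.add_eq_zero]
    rcases n.eq_zero_or_pos with rfl | hn
    · simp
    have hterm : ∀ i ∈ range (2 ^ n), u ^ i * u ^ (2 ^ n - 1 - i) = u ^ (2 ^ n - 1) := by
      intro i hi
      rw [← pow_add, Nat.add_sub_cancel' (by simp at hi; omega)]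
    have hchar : ((2 ^ n : ℕ) : R) = 0 :=
      (CharP.cast_eq_zero_iff R 2 _).mpr (dvd_pow_self 2 hn.ne')
    rw [huv, sum_congr rfl hterm, sum_const, card_range, nsmul_eq_mul, hchar, zero_mul,
      zero_pow (Nat.sub_ne_zero_of_lt (Nat.one_lt_two_pow hn.ne'))]
  · -- times `u + v`, both sides become `u ^ 2 ^ n + v ^ 2 ^ n`, as `u - v = u + v`
    apply mul_right_cancel₀ huv
    rw [← pow_succ, Nat.sub_add_cancel Nat.one_le_two_pow, add_pow_char_pow,
      ← CharTwo.sub_eq_add u v, geom_sum₂_mul, CharTwo.sub_eq_add]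

theorem mul_add_pow_two_mul_sub_one_pow {R : Type*} [CommRing R] [IsDomain R] [CharP R 2]
    {n q : ℕ} (hq : q = 2 ^ n) (a x : R) :
    (a * x + x ^ (2 * q - 1)) ^ ((q - 1) * q) =
      ∑ j ∈ range q, a ^ (q * (q - 1 - j)) * x ^ (q * (q - 1) * (2 * j + 1)) := by
  have hfrob : (a * x + x ^ (2 * q - 1)) ^ q = x ^ ((2 * q - 1) * q) + (a * x) ^ q := by
    rw [hq, add_pow_char_pow, add_comm, pow_mul]
  rw [mul_comm (q - 1), pow_mul, hfrob, hq, add_pow_two_pow_sub_one, ← hq]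
  refine sum_congr rfl fun j hj => ?_
  have hexp : (2 * q - 1) * q * j + q * (q - 1 - j) = q * (q - 1) * (2 * j + 1) := by
    have : j < q := mem_range.mp hj
    zify [(by omega : 1 ≤ 2 * q), (by omega : 1 ≤ q), (by omega : j ≤ q - 1)]
    ring
  rw [← hexp, pow_add]
  simp only [mul_pow, ← pow_mul]
  ring

theorem FiniteField.charP_two_of_card_eq_two_pow {K : Type*} [Field K] [Fintype K] {k : ℕ}
    (hk : Fintype.card K = 2 ^ k) : CharP K 2 := by
  obtain ⟨p, hchar, m, hp, hcard⟩ := FiniteField.card' K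
  have : p ∣ 2 := hp.dvd_of_dvd_pow (hk ▸ hcard ▸ dvd_pow_self p m.ne_zero)
  rwa [(Nat.prime_dvd_prime_iff_eq hp Nat.prime_two).mp this] at hchar

theorem FiniteField.sum_pow_eq_ite_s5 {K : Type*} [Field K] [Fintype K] {e : ℕ} (he : e ≠ 0) :
    ∑ x : K, x ^ e = if Fintype.card K - 1 ∣ e then -1 else 0 := by
  classical
  have hzero : ∑ x : {x : K // ¬x ≠ 0}, (x : K) ^ e = 0 :=
    sum_eq_zero fun x _ => by rw [not_not.mp x.2, zero_pow he]
  rw [← FiniteField.sum_pow_units, ← Fintype.sum_subtype_add_sum_subtype (· ≠ 0), hzero, add_zero]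
  exact (Fintype.sum_equiv unitsEquivNeZero _ _ fun _ => rfl).symm

theorem FiniteField.sum_pow_comp_eq_zero_of_bijective {K : Type*} [Field K] [Fintype K]
    {f : K → K} (hf : f.Bijective) {e : ℕ} (he : e < Fintype.card K - 1) :
    ∑ x, f x ^ e = 0 :=
  (Fintype.sum_bijective f hf _ _ fun _ => rfl).trans (FiniteField.sum_pow_lt_card_sub_one K e he)

theorem sum_mul_add_pow_two_mul_sub_one_pow {F : Type*} [Field F] [Fintype F] [CharP F 2]
    {n q : ℕ} (hn : 0 < n) (hq : q = 2 ^ n) (hcard : Fintype.card F = q ^ 2) (a : F) :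
    ∑ x : F, (a * x + x ^ (2 * q - 1)) ^ ((q - 1) * q) = a ^ (q ^ 2 / 2 - q) := by
  have hq1 : 1 < q := hq ▸ Nat.one_lt_two_pow hn.ne'
  have hqeven : Even q := hq ▸ Nat.even_pow.mpr ⟨even_two, hn.ne'⟩
  have hpow_sum : ∀ j ∈ range q,
      ∑ x : F, x ^ (q * (q - 1) * (2 * j + 1)) = if j = q / 2 then -1 else 0 := by
    intro j hj
    have hq0 : 0 < q - 1 := by omega
    rw [FiniteField.sum_pow_eq_ite_s5 (by positivity), hcard]
    simp only [Nat.sq_sub_one_dvd_mul_iff hq1,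
      Nat.add_one_dvd_two_mul_add_one_iff hqeven (mem_range.mp hj)]
  have hexp : q * (q - 1 - q / 2) = q ^ 2 / 2 - q := by
    have := Nat.even_iff.mp hqeven
    rw [show q - 1 - q / 2 = q / 2 - 1 by omega, Nat.mul_sub_one, sq,
      Nat.mul_div_assoc q (even_iff_two_dvd.mp hqeven)]
  calc ∑ x : F, (a * x + x ^ (2 * q - 1)) ^ ((q - 1) * q)
      = ∑ j ∈ range q, a ^ (q * (q - 1 - j)) * ∑ x : F, x ^ (q * (q - 1) * (2 * j + 1)) := by
        simp_rw [mul_add_pow_two_mul_sub_one_pow hq, mul_sum]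
        exact sum_comm
    _ = ∑ j ∈ range q, if j = q / 2 then -a ^ (q * (q - 1 - j)) else 0 :=
        sum_congr rfl fun j hj => by rw [hpow_sum j hj, mul_ite, mul_neg_one, mul_zero]
    _ = a ^ (q ^ 2 / 2 - q) := by
        rw [sum_ite_eq', if_pos (mem_range.mpr (by omega)), CharTwo.neg_eq, hexp]

/-- For even `q` and `a ∈ F_{q²}*`, `f(x) = a x + x^(2q-1)` is not a permutation
polynomial of `F_{q²}`: indeed `∑_{x ∈ F_{q²}} f(x)^((q-1)q) = a^(q²/2 - q) ≠ 0`. -/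
theorem stmt_5 (n q : ℕ) (hn : 0 < n) (hq : q = 2 ^ n)
    (F : Type*) [Field F] [Fintype F] (hcard : Fintype.card F = q ^ 2)
    (a : F) (ha : a ≠ 0) :
    (∑ x : F, (a * x + x ^ (2 * q - 1)) ^ ((q - 1) * q) = a ^ (q ^ 2 / 2 - q)) ∧
    a ^ (q ^ 2 / 2 - q) ≠ 0 ∧
    ¬ Function.Bijective (fun x : F => a * x + x ^ (2 * q - 1)) := by
  have : CharP F 2 := FiniteField.charP_two_of_card_eq_two_pow (by rw [hcard, hq, ← pow_mul])
  have hsum := sum_mul_add_pow_two_mul_sub_one_pow hn hq hcard a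
  refine ⟨hsum, pow_ne_zero _ ha, fun hbij => pow_ne_zero (q ^ 2 / 2 - q) ha ?_⟩
  have hq1 : 1 < q := hq ▸ Nat.one_lt_two_pow hn.ne'
  have hlt : (q - 1) * q < Fintype.card F - 1 := by
    rw [hcard, Nat.sub_one_mul, ← sq]
    have := Nat.le_self_pow two_ne_zero q
    omega
  rw [← hsum, FiniteField.sum_pow_comp_eq_zero_of_bijective hbij hlt]
end

section
/- Let q be an odd prime power and a ∈ F_{q^2}^* with (-a)^{(q+1)/2} = -1. Then f(x) = a x + x^{2q-1} is a permutation polynomial of F_{q^2}. -/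
/-- For odd prime power `q` and `a ∈ F_{q²}*` with `(-a)^((q+1)/2) = -1`,
`f(x) = a x + x^(2q-1)` is a permutation polynomial of `F_{q²}`. -/
theorem stmt_6 (p n q : ℕ) (hp : p.Prime) (hn : 0 < n) (hq : q = p ^ n)
    (hodd : Odd q)
    (F : Type*) [Field F] [Fintype F] (hcard : Fintype.card F = q ^ 2)
    (a : F) (ha : a ≠ 0) (h : (-a) ^ ((q + 1) / 2) = -1) :
    Function.Bijective (fun x : F => a * x + x ^ (2 * q - 1)) := by
  obtain ⟨k, rfl⟩ := hodd
  -- p is odd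
  have hpodd : Odd p := by
    rcases hp.eq_two_or_odd' with rfl | hpo
    · obtain ⟨t, ht⟩ : 2 ∣ 2 ^ n := dvd_pow_self 2 hn.ne'
      omega
    · exact hpo
  have hp3 : 3 ≤ p := by obtain ⟨j, hj⟩ := hpodd; have := hp.two_le; omega
  have hk1 : 1 ≤ k := by
    have h1 : p ≤ p ^ n := Nat.le_self_pow hn.ne' p
    omega
  -- characteristic of F is p
  have hchar : CharP F p := by
    have hr : (ringChar F).Prime := CharP.char_is_prime F (ringChar F)
    obtain ⟨m, _, hm⟩ := FiniteField.card F (ringChar F)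
    have hdvd : ringChar F ∣ p ^ (n * 2) := by
      rw [pow_mul, ← hq, ← hcard, hm]
      exact dvd_pow_self _ (by positivity)
    have : ringChar F = p :=
      (Nat.prime_dvd_prime_iff_eq hr hp).mp (hr.dvd_of_dvd_pow hdvd)
    exact this ▸ ringChar.charP F
  haveI := hchar
  haveI : Fact p.Prime := ⟨hp⟩
  haveI : Fact (2 < p) := ⟨by omega⟩
  have hne : (-1 : F) ≠ 1 := CharP.neg_one_ne_one F p
  -- rewrite exponents
  have e1 : 2 * (2 * k + 1) - 1 = 4 * k + 1 := by omega
  have e2 : (2 * k + 1 + 1) / 2 = k + 1 := by omega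
  rw [e2] at h
  simp only [e1]
  -- Frobenius
  have frob : ∀ x y : F, (x + y) ^ (2 * k + 1) = x ^ (2 * k + 1) + y ^ (2 * k + 1) := by
    intro x y
    rw [hq]
    exact add_pow_char_pow x y p n
  -- power of card facts
  have hpc : ∀ x : F, x ^ ((2 * k + 1) ^ 2) = x := by
    intro x
    rw [← hcard]
    exact FiniteField.pow_card x
  have hpc1 : ∀ x : F, x ≠ 0 → x ^ (4 * k ^ 2 + 4 * k) = 1 := by
    intro x hx
    have e : 4 * k ^ 2 + 4 * k = (2 * k + 1) ^ 2 - 1 :=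
      (Nat.sub_eq_of_eq_add (by ring)).symm
    rw [e, ← hcard]
    exact FiniteField.pow_card_sub_one_eq_one x hx
  -- norm of a is 1
  have haq : a ^ (2 * k + 2) = 1 := by
    have h2 : ((-a) ^ (k + 1)) ^ 2 = 1 := by rw [h]; ring
    rw [← pow_mul] at h2
    have e : (k + 1) * 2 = 2 * k + 2 := by ring
    rw [e, Even.neg_pow ⟨k + 1, by ring⟩] at h2
    exact h2
  -- kernel lemma
  have hker : ∀ x : F, a * x + x ^ (4 * k + 1) = 0 → x = 0 := by
    intro x hx0
    by_contra hx
    have h1 : x ^ (4 * k) * x = -a * x := by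
      rw [← pow_succ, show x ^ (4 * k + 1) = -(a * x) from by linear_combination hx0]
      ring
    have h2 : x ^ (4 * k) = -a := mul_right_cancel₀ hx h1
    have : (1 : F) = -1 := by
      rw [← h, ← h2, ← pow_mul]
      have e : 4 * k * (k + 1) = 4 * k ^ 2 + 4 * k := by ring
      rw [e, hpc1 x hx]
    exact hne this.symm
  -- key identity
  have key : ∀ x : F, x ≠ 0 →
      a * x ^ (2 * k) * (a * x + x ^ (4 * k + 1)) ^ (2 * k + 1)
        = a * x + x ^ (4 * k + 1) := by
    intro x hx
    rw [frob (a * x) (x ^ (4 * k + 1))]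
    have expand : a * x ^ (2 * k) * ((a * x) ^ (2 * k + 1) + (x ^ (4 * k + 1)) ^ (2 * k + 1))
        = a ^ (2 * k + 2) * x ^ (4 * k + 1)
          + a * (x ^ (4 * k ^ 2 + 4 * k) * x ^ ((2 * k + 1) ^ 2)) := by
      ring
    rw [expand, haq, hpc1 x hx, hpc x]
    ring
  -- injectivity suffices
  rw [← Finite.injective_iff_bijective]
  intro x u hxu
  simp only at hxu
  by_cases hx : x = 0
  · subst hx
    symm
    apply hker
    rw [← hxu]
    simp [zero_pow (show 4 * k + 1 ≠ 0 by omega)]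
  · by_cases hu : u = 0
    · subst hu
      exact absurd (hker x (by rw [hxu]; simp [zero_pow (show 4 * k + 1 ≠ 0 by omega)])) hx
    · have hc : a * x + x ^ (4 * k + 1) ≠ 0 := fun h0 => hx (hker x h0)
      have kx := key x hx
      have ku := key u hu
      rw [← hxu] at ku
      have hpow : x ^ (2 * k) = u ^ (2 * k) := by
        have := kx.trans ku.symm
        have h2 := mul_right_cancel₀ (pow_ne_zero _ hc) this
        exact mul_left_cancel₀ ha h2
      have hcu : (a * x + x ^ (4 * k + 1)) * u = (a * x + x ^ (4 * k + 1)) * x := by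
        calc (a * x + x ^ (4 * k + 1)) * u
            = a * (x * u) + (x ^ (2 * k)) ^ 2 * (x * u) := by ring
          _ = a * (x * u) + (u ^ (2 * k)) ^ 2 * (x * u) := by rw [hpow]
          _ = (a * u + u ^ (4 * k + 1)) * x := by ring
          _ = (a * x + x ^ (4 * k + 1)) * x := by rw [← hxu]
      exact (mul_left_cancel₀ hc hcu).symm
end

section
/- Let q be an odd prime power and a, b ∈ F_{q^2} with ab ≠ 0, a = b^{1-q}, and 1 - 4a/b^2 a nonzero square in F_q. Then f(x) = a x + b x^q + x^{2q-1} is a permutation polynomial of F_{q^2}. -/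
/-- For odd prime power `q`, `a, b ∈ F_{q²}*` with `a = b^(1-q)` (i.e. `a b^q = b`)
and `1 - 4a/b²` a nonzero square of `F_q` (elements of `F_q` being those fixed by
`x ↦ x^q`), `f(x) = a x + b x^q + x^(2q-1)` is a permutation polynomial of `F_{q²}`. -/
theorem stmt_8 (p n q : ℕ) (hp : p.Prime) (hn : 0 < n) (hq : q = p ^ n)
    (hodd : Odd q)
    (F : Type*) [Field F] [Fintype F] (hcard : Fintype.card F = q ^ 2)
    (a b : F) (ha : a ≠ 0) (hb : b ≠ 0) (hab : a * b ^ q = b)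
    (hsq : ∃ c : F, c ≠ 0 ∧ c ^ q = c ∧ c ^ 2 = 1 - 4 * a / b ^ 2) :
    Function.Bijective (fun x : F => a * x + b * x ^ q + x ^ (2 * q - 1)) := by
  obtain ⟨c, hc0, hcq, hc2⟩ := hsq
  haveI := Fact.mk hp
  -- char F = p
  haveI hchar : CharP F p := by
    obtain ⟨m, hrp, hm⟩ := FiniteField.card F (ringChar F)
    have h1 : ringChar F ∣ p ^ (n * 2) := by
      rw [pow_mul, ← hq, ← hcard, hm]
      exact dvd_pow_self _ m.2.ne'
    have : ringChar F = p :=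
      (Nat.prime_dvd_prime_iff_eq hrp hp).mp (Nat.Prime.dvd_of_dvd_pow hrp h1)
    exact this ▸ ringChar.charP F
  -- p is odd
  have hp2 : p ≠ 2 := by
    rintro rfl
    have : Even q := hq ▸ (Nat.even_pow.mpr ⟨even_two, hn.ne'⟩)
    exact (Nat.not_odd_iff_even.mpr this) hodd
  have h2F : (2 : F) ≠ 0 := by
    have : ((2:ℕ):F) ≠ 0 := by
      rw [Ne, CharP.cast_eq_zero_iff F p]
      exact fun h => hp2 ((Nat.prime_dvd_prime_iff_eq hp Nat.prime_two).mp h)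
    exact_mod_cast this
  have hq1 : 1 ≤ q := by rw [hq]; exact Nat.one_le_pow _ _ hp.pos
  -- Frobenius
  have frob : ∀ x y : F, (x + y) ^ q = x ^ q + y ^ q := by
    intro x y; rw [hq]; exact add_pow_char_pow x y p n
  have hFq : ∀ x : F, (x ^ q) ^ q = x := by
    intro x
    rw [← pow_mul, ← sq, ← hcard]
    exact FiniteField.pow_card x
  -- a^q * a = 1
  have habq : a ^ q * b = b ^ q := by
    have h := congrArg (· ^ q) hab
    simpa only [mul_pow, hFq] using h
  have haq : a ^ q * a = 1 := by
    apply mul_right_cancel₀ hb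
    calc a ^ q * a * b = a * (a ^ q * b) := by ring
      _ = a * b ^ q := by rw [habq]
      _ = b := hab
      _ = 1 * b := (one_mul b).symm
  -- the quadratic roots
  set u : F := b * (1 + c) / 2 with hu_def
  set v : F := b * (1 - c) / 2 with hv_def
  have h2q : (2 : F) ^ q = 2 := by
    rw [← one_add_one_eq_two, frob, one_pow]
  have hc2' : c ^ 2 * b ^ 2 = b ^ 2 - 4 * a := by
    field_simp at hc2
    linear_combination hc2
  have huv_sum : u + v = b := by
    rw [hu_def, hv_def]; field_simp; ring
  have huv_mul : u * v = a := by
    rw [hu_def, hv_def]; field_simp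
    linear_combination -hc2'
  have huq : u ^ q = b ^ q * (1 + c) / 2 := by
    rw [hu_def, div_pow, mul_pow, frob, one_pow, hcq, h2q]
  have hvq : v ^ q = b ^ q * (1 - c) / 2 := by
    have hsub : (1 - c) ^ q = 1 - c ^ q := by
      have := frob (1 - c) c; simp at this
      linear_combination -this
    rw [hv_def, div_pow, mul_pow, hsub, hcq, h2q]
  have h4F : (4 : F) ≠ 0 := by
    have : (4 : F) = 2 * 2 := by norm_num
    rw [this]; exact mul_ne_zero h2F h2F
  have key4 : b ^ q * b * (1 - c ^ 2) = 4 := by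
    have h1 : b ^ q * b * (1 - c ^ 2) * b ^ 2 = 4 * b ^ 2 := by
      linear_combination (-(b ^ q * b)) * hc2' + 4 * b * hab
    exact mul_right_cancel₀ (pow_ne_zero 2 hb) h1
  have huqv : u ^ q * v = 1 := by
    have h1 : u ^ q * v = b ^ q * b * (1 - c ^ 2) / 4 := by
      rw [huq, hv_def]; field_simp; ring
    rw [h1, key4, div_self h4F]
  have hvqu : v ^ q * u = 1 := by
    have h1 : v ^ q * u = b ^ q * b * (1 - c ^ 2) / 4 := by
      rw [hvq, hu_def]; field_simp; ring
    rw [h1, key4, div_self h4F]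
  have hune : u ≠ v := by
    intro h
    have : b * c = 0 := by
      have h' : u - v = b * c := by rw [hu_def, hv_def]; field_simp; ring
      rw [h, sub_self] at h'; exact h'.symm
    rcases mul_eq_zero.mp this with h1 | h1
    exacts [hb h1, hc0 h1]
  -- auxiliary power facts
  have hx2q : ∀ x : F, x ^ (2 * q - 1) * x = x ^ (2 * q) := by
    intro x; rw [← pow_succ]; congr 1; omega
  have hxq2 : ∀ x : F, x ^ q * x ^ q = x ^ (2 * q) := by
    intro x; rw [← pow_add]; congr 1; ring
  -- factorization of x * f x
  have hfac : ∀ x : F, x * (a * x + b * x ^ q + x ^ (2 * q - 1))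
      = (x ^ q + u * x) * (x ^ q + v * x) := by
    intro x
    linear_combination hx2q x - hxq2 x - (x ^ q * x) * huv_sum - x ^ 2 * huv_mul
  -- the key identity: a * (x * f x)^q = x * f x
  have hkey : ∀ x : F, a * (x ^ q * (a * x + b * x ^ q + x ^ (2 * q - 1)) ^ q)
      = x * (a * x + b * x ^ q + x ^ (2 * q - 1)) := by
    intro x
    have hz : x * (a * x + b * x ^ q + x ^ (2 * q - 1))
        = a * x ^ 2 + b * (x ^ q * x) + x ^ (2 * q) := by
      linear_combination hx2q x
    have hzq : x ^ q * (a * x + b * x ^ q + x ^ (2 * q - 1))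
        = (x ^ q) * (a * x) + b * (x ^ q * x ^ q) + x ^ q * x ^ (2 * q - 1) := by ring
    have hpow : (x * (a * x + b * x ^ q + x ^ (2 * q - 1))) ^ q
        = a ^ q * (x ^ q) ^ 2 + b ^ q * (x * x ^ q) + x ^ 2 := by
      rw [hz, frob, frob, mul_pow, mul_pow]
      have e1 : (x ^ 2) ^ q = (x ^ q) ^ 2 := by
        rw [← pow_mul, ← pow_mul, Nat.mul_comm]
      have e2 : (x ^ q * x) ^ q = x * x ^ q := by
        rw [mul_pow, hFq]
      have e3 : (x ^ (2 * q)) ^ q = x ^ 2 := by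
        rw [← hxq2, mul_pow, hFq]; exact (sq x).symm
      rw [e1, e2, e3]
    have hsplit : (x * (a * x + b * x ^ q + x ^ (2 * q - 1))) ^ q
        = x ^ q * (a * x + b * x ^ q + x ^ (2 * q - 1)) ^ q := by rw [mul_pow]
    rw [← hsplit, hpow, hz]
    linear_combination (x ^ q) ^ 2 * haq + (x * x ^ q) * hab + hxq2 x
  -- basic exponent facts
  have hq0 : q ≠ 0 := by omega
  have h2q0 : 2 * q - 1 ≠ 0 := by omega
  have hneg1 : (-1 : F) ^ q = -1 := Odd.neg_one_pow hodd
  -- f does not vanish away from 0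
  have hfz : ∀ x : F, x ≠ 0 → a * x + b * x ^ q + x ^ (2 * q - 1) ≠ 0 := by
    intro x hx hfx
    have h0 : (x ^ q + u * x) * (x ^ q + v * x) = 0 := by
      rw [← hfac x, hfx, mul_zero]
    have huq0 : u ^ q ≠ 0 := fun h => one_ne_zero ((h ▸ huqv).symm.trans (zero_mul v))
    have hvq0 : v ^ q ≠ 0 := fun h => one_ne_zero ((h ▸ hvqu).symm.trans (zero_mul u))
    rcases mul_eq_zero.mp h0 with h1 | h1
    · have hxq : x ^ q = -(u * x) := by linear_combination h1
      have h2 : x = u ^ q * u * x := by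
        calc x = (x ^ q) ^ q := (hFq x).symm
          _ = (-1 * (u * x)) ^ q := by rw [hxq]; ring_nf
          _ = -1 * (u ^ q * x ^ q) := by rw [mul_pow, mul_pow, hneg1]
          _ = -1 * (u ^ q * (-(u * x))) := by rw [hxq]
          _ = u ^ q * u * x := by ring
      have h4 : (u ^ q * u - 1) * x = 0 := by linear_combination -h2
      have h3 : u ^ q * u = 1 := by
        rcases mul_eq_zero.mp h4 with h5 | h5
        · exact sub_eq_zero.mp h5
        · exact absurd h5 hx
      exact hune (mul_left_cancel₀ huq0 (h3.trans huqv.symm))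
    · have hxq : x ^ q = -(v * x) := by linear_combination h1
      have h2 : x = v ^ q * v * x := by
        calc x = (x ^ q) ^ q := (hFq x).symm
          _ = (-1 * (v * x)) ^ q := by rw [hxq]; ring_nf
          _ = -1 * (v ^ q * x ^ q) := by rw [mul_pow, mul_pow, hneg1]
          _ = -1 * (v ^ q * (-(v * x))) := by rw [hxq]
          _ = v ^ q * v * x := by ring
      have h4 : (v ^ q * v - 1) * x = 0 := by linear_combination -h2
      have h3 : v ^ q * v = 1 := by
        rcases mul_eq_zero.mp h4 with h5 | h5
        · exact sub_eq_zero.mp h5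
        · exact absurd h5 hx
      exact hune (mul_left_cancel₀ hvq0 (h3.trans hvqu.symm)).symm
  -- injectivity
  have hinj : Function.Injective (fun x : F => a * x + b * x ^ q + x ^ (2 * q - 1)) := by
    intro x y hxy
    simp only at hxy
    by_cases hx : x = 0
    · subst hx
      by_contra hy
      exact hfz y (fun h => hy h.symm)
        (by rw [← hxy]; simp [zero_pow hq0, zero_pow h2q0])
    by_cases hy : y = 0
    · subst hy
      exact absurd (by rw [hxy]; simp [zero_pow hq0, zero_pow h2q0]) (hfz x hx)
    have h1 := hkey x
    have h2 := hkey y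
    set w : F := a * x + b * x ^ q + x ^ (2 * q - 1) with hw
    rw [← hxy] at h2
    -- h1 : a * (x^q * w^q) = x * w, h2 : a * (y^q * w^q) = y * w
    have hw0 : w ≠ 0 := hfz x hx
    have hwq : w ^ q ≠ 0 := pow_ne_zero _ hw0
    have h4 : (a * w ^ q) * (x ^ q * y) = (a * w ^ q) * (y ^ q * x) := by
      linear_combination y * h1 - x * h2
    have h5 : x ^ q * y = y ^ q * x := mul_left_cancel₀ (mul_ne_zero ha hwq) h4
    have hyq : y ^ q ≠ 0 := pow_ne_zero _ hy
    have hl : (x * y⁻¹) ^ q = x * y⁻¹ := by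
      rw [mul_pow, inv_pow]
      field_simp
      linear_combination h5
    set l : F := x * y⁻¹ with hl_def
    have hlne : l ≠ 0 := mul_ne_zero hx (inv_ne_zero hy)
    have hl2 : l ^ (2 * q - 1) = l := by
      have e : l ^ (2 * q - 1) * l = l * l := by
        rw [hx2q l]
        have e2 : l ^ (2 * q) = (l ^ q) ^ 2 := by rw [← pow_mul, Nat.mul_comm]
        rw [e2, hl]; ring
      exact mul_right_cancel₀ hlne e
    have hx_eq : x = l * y := by rw [hl_def]; field_simp
    have hwl : w = l * w := by
      calc w = a * x + b * x ^ q + x ^ (2 * q - 1) := hw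
        _ = a * (l * y) + b * (l * y) ^ q + (l * y) ^ (2 * q - 1) := by rw [← hx_eq]
        _ = l * (a * y + b * y ^ q + y ^ (2 * q - 1)) := by
            have e1 : (l * y) ^ q = l ^ q * y ^ q := mul_pow l y q
            have e2 : (l * y) ^ (2 * q - 1) = l ^ (2 * q - 1) * y ^ (2 * q - 1) :=
              mul_pow l y (2 * q - 1)
            rw [e1, e2, hl, hl2]; ring
        _ = l * w := by rw [hxy]
    have hl1 : l = 1 := by
      have h6 : (l - 1) * w = 0 := by linear_combination -hwl
      rcases mul_eq_zero.mp h6 with h7 | h7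
      · exact sub_eq_zero.mp h7
      · exact absurd h7 hw0
    rw [hx_eq, hl1, one_mul]
  exact Finite.injective_iff_bijective.mp hinj
end

section
/- Let q be even and b ∈ F_{q^2}^* with Tr_{F_q/F_2}(b^{-1-q}) = 0. Then f(x) = b^{1-q} x + b x^q + x^{2q-1} is a permutation polynomial of F_{q^2}. -/
/-!
Write `f(x) = b^(1-q) x + b x^q + x^(2q-1)` as `f(x) = h(x^(q-1)) · x` with
`h(t) = t² + b t + b^(1-q)`. Applying the Frobenius `x ↦ x^q`, an involution of `F_{q²}`, gives
`b x^q f(x)^q = b^q x f(x)`, so for `x ≠ 0` the value `x^(q-1)` is determined by `f(x)`, and then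
so is `x = f(x) / h(x^(q-1))`. This inverts `f` as soon as `h` has no root `t` with
`t^(q+1) = 1`. Such a root gives, after the substitution `t = s b`, a solution of the
Artin–Schreier equation `s² + s = b^(-1-q)`; the trace hypothesis forces `s ∈ F_q`, and then
`t^(q+1) = 1` forces `s = 0`, which is absurd.
-/

open Finset

theorem CharTwo.sum_pow_two_pow_eq_of_sq_add_self {R : Type*} [CommRing R] [CharP R 2]
    {s c : R} (hs : s ^ 2 + s = c) (m : ℕ) : ∑ i ∈ range m, c ^ 2 ^ i = s ^ 2 ^ m + s := by
  induction m with
  | zero => simp [CharTwo.add_self_eq_zero]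
  | succ k ih =>
    have hck : c ^ 2 ^ k = s ^ 2 ^ (k + 1) + s ^ 2 ^ k := by
      rw [← hs, add_pow_char_pow, ← pow_mul, pow_succ']
    rw [sum_range_succ, ih, hck]
    linear_combination s ^ 2 ^ k * CharTwo.two_eq_zero (R := R)

theorem pow_pred_pow_succ_eq_one {M : Type*} [MonoidWithZero M] [IsRightCancelMulZero M] {q : ℕ}
    (hq : 1 ≤ q) {x : M} (hx : x ≠ 0) (hfix : x ^ (q * q) = x) :
    (x ^ (q - 1)) ^ (q + 1) = 1 := by
  apply mul_right_cancel₀ hx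
  obtain ⟨k, rfl⟩ : ∃ k, q = k + 1 := ⟨q - 1, by omega⟩
  rw [← pow_mul, ← pow_succ, one_mul, Nat.add_sub_cancel]
  convert hfix using 2
  ring

section Trinomial

variable {F : Type*} [Field F]

def trinomial (b : F) (q : ℕ) (x : F) : F :=
  b * (b ^ q)⁻¹ * x + b * x ^ q + x ^ (2 * q - 1)

def quadraticFactor (b : F) (q : ℕ) (t : F) : F :=
  t ^ 2 + b * t + b * (b ^ q)⁻¹

theorem trinomial_eq_quadraticFactor_mul {q : ℕ} (hq : 1 ≤ q) (b x : F) :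
    trinomial b q x = quadraticFactor b q (x ^ (q - 1)) * x := by
  have hxq : x ^ q = x ^ (q - 1) * x := by rw [← pow_succ, Nat.sub_add_cancel hq]
  have hx2q : x ^ (2 * q - 1) = (x ^ (q - 1)) ^ 2 * x := by
    rw [← pow_mul, ← pow_succ]; congr 1; omega
  simp only [trinomial, quadraticFactor, hxq, hx2q]
  ring

theorem trinomial_frobenius_identity {q : ℕ} (hq : 1 ≤ q) {b : F} (hb : b ≠ 0)
    (hadd : ∀ u v : F, (u + v) ^ q = u ^ q + v ^ q) (hfix : ∀ x : F, x ^ (q * q) = x) (x : F) :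
    b * x ^ q * trinomial b q x ^ q = b ^ q * (x * trinomial b q x) := by
  have hfq : trinomial b q x ^ q = b ^ q * b⁻¹ * x ^ q + b ^ q * x + x ^ ((2 * q - 1) * q) := by
    simp only [trinomial, hadd, mul_pow, inv_pow, ← pow_mul, hfix]
  have hexp : q + (2 * q - 1) * q = q * q * 2 := by
    obtain ⟨k, rfl⟩ : ∃ k, q = k + 1 := ⟨q - 1, by omega⟩
    rw [show 2 * (k + 1) - 1 = 2 * k + 1 by omega]
    ring
  have hx2 : x ^ q * x ^ ((2 * q - 1) * q) = x ^ 2 := by rw [← pow_add, hexp, pow_mul, hfix]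
  have hx2q : x * x ^ (2 * q - 1) = x ^ q * x ^ q := by
    rw [← pow_succ', ← pow_add]; congr 1; omega
  calc b * x ^ q * trinomial b q x ^ q
      = b ^ q * (b * b⁻¹) * (x ^ q * x ^ q) + b * b ^ q * (x ^ q * x)
          + b * (x ^ q * x ^ ((2 * q - 1) * q)) := by rw [hfq]; ring
    _ = b * (b ^ q * (b ^ q)⁻¹) * (x * x) + b * b ^ q * (x * x ^ q)
          + b ^ q * (x * x ^ (2 * q - 1)) := by
        rw [mul_inv_cancel₀ hb, mul_inv_cancel₀ (pow_ne_zero q hb), hx2, hx2q]; ring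
    _ = b ^ q * (x * trinomial b q x) := by simp only [trinomial]; ring

theorem quadraticFactor_ne_zero_of_pow_succ_eq_one [CharP F 2] {n q : ℕ} (hq : q = 2 ^ n)
    {b : F} (hb : b ≠ 0) (htr : ∑ i ∈ range n, ((b ^ (q + 1))⁻¹) ^ 2 ^ i = 0) {t : F}
    (ht : t ^ (q + 1) = 1) :
    quadraticFactor b q t ≠ 0 := by
  intro hroot
  set c := (b ^ (q + 1))⁻¹
  have hcb : c * b ^ (q + 1) = 1 := inv_mul_cancel₀ (pow_ne_zero _ hb)
  set s := t / b
  have hts : t = s * b := (div_mul_cancel₀ t hb).symm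
  have hs : s ^ 2 + s = c := by
    have hcb2 : c * b ^ 2 = b * (b ^ q)⁻¹ := by simp only [c]; field_simp; ring
    apply mul_right_cancel₀ (pow_ne_zero 2 hb)
    rw [quadraticFactor, hts] at hroot
    rw [hcb2]
    linear_combination hroot - b * (b ^ q)⁻¹ * CharTwo.two_eq_zero (R := F)
  have hsq : s ^ q = s := by
    rw [← CharTwo.add_eq_zero, hq, ← CharTwo.sum_pow_two_pow_eq_of_sq_add_self hs, htr]
  have hs2 : s ^ 2 = c := by
    have hsq1 : s ^ (q + 1) = s ^ 2 := by rw [pow_succ, hsq, sq]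
    apply mul_right_cancel₀ (pow_ne_zero (q + 1) hb)
    rw [hcb, ← hsq1, ← mul_pow, ← hts, ht]
  have hs0 : s = 0 := by rw [← hs2] at hs; simpa using hs
  rw [hts, hs0, zero_mul, zero_pow (Nat.succ_ne_zero q)] at ht
  exact zero_ne_one ht

def trinomialInv (b : F) (q : ℕ) (z : F) : F :=
  z / quadraticFactor b q (b ^ q * z / (b * z ^ q))

theorem leftInverse_trinomialInv_trinomial [CharP F 2] {n q : ℕ} (hq : q = 2 ^ n) {b : F}
    (hb : b ≠ 0) (htr : ∑ i ∈ range n, ((b ^ (q + 1))⁻¹) ^ 2 ^ i = 0)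
    (hfix : ∀ x : F, x ^ (q * q) = x) :
    Function.LeftInverse (trinomialInv b q) (trinomial b q) := by
  have hq1 : 1 ≤ q := hq ▸ Nat.one_le_two_pow
  intro x
  rcases eq_or_ne x 0 with rfl | hx
  · rw [trinomial_eq_quadraticFactor_mul hq1, mul_zero, trinomialInv, zero_div]
  set t := x ^ (q - 1)
  have hQ : quadraticFactor b q t ≠ 0 :=
    quadraticFactor_ne_zero_of_pow_succ_eq_one hq hb htr (pow_pred_pow_succ_eq_one hq1 hx (hfix x))
  have hf := trinomial_eq_quadraticFactor_mul hq1 b x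
  have hf0 : trinomial b q x ≠ 0 := by rw [hf]; exact mul_ne_zero hQ hx
  have hadd : ∀ u v : F, (u + v) ^ q = u ^ q + v ^ q := hq ▸ fun u v => add_pow_char_pow u v 2 n
  have key := trinomial_frobenius_identity hq1 hb hadd hfix x
  have hxq : x ^ q = t * x := by rw [← pow_succ, Nat.sub_add_cancel hq1]
  have ht : b ^ q * trinomial b q x / (b * trinomial b q x ^ q) = t := by
    rw [div_eq_iff (mul_ne_zero hb (pow_ne_zero q hf0))]
    apply mul_left_cancel₀ hx
    linear_combination -key + b * trinomial b q x ^ q * hxq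
  rw [trinomialInv, ht, hf, mul_div_cancel_left₀ x hQ]

end Trinomial

theorem stmt_9_general (n q : ℕ) (hq : q = 2 ^ n)
    (F : Type*) [Field F] [Fintype F] (hcard : Fintype.card F = q ^ 2)
    (b : F) (hb : b ≠ 0)
    (htr : ∑ i ∈ Finset.range n, ((b ^ (q + 1))⁻¹) ^ (2 ^ i) = 0) :
    Function.Bijective
      (fun x : F => b * (b ^ q)⁻¹ * x + b * x ^ q + x ^ (2 * q - 1)) := by
  have : CharP F 2 :=
    charP_of_card_eq_prime_pow (f := 2 * n) (by rw [hcard, hq, ← pow_mul, mul_comm])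
  have hfix : ∀ x : F, x ^ (q * q) = x := fun x => by rw [← sq, ← hcard, FiniteField.pow_card]
  exact Finite.injective_iff_bijective.mp
    (leftInverse_trinomialInv_trinomial hq hb htr hfix).injective

/-- For `q = 2ⁿ` and `b ∈ F_{q²}*` with `Tr_{F_q/F_2}(b^(-1-q)) = 0`
(the absolute trace `∑_{i<n} x^(2^i)` of `b^(-(q+1)) ∈ F_q`),
`f(x) = b^(1-q) x + b x^q + x^(2q-1)` is a permutation polynomial of `F_{q²}`. -/
theorem stmt_9 (n q : ℕ) (hn : 0 < n) (hq : q = 2 ^ n)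
    (F : Type*) [Field F] [Fintype F] (hcard : Fintype.card F = q ^ 2)
    (b : F) (hb : b ≠ 0)
    (htr : ∑ i ∈ Finset.range n, ((b ^ (q + 1))⁻¹) ^ (2 ^ i) = 0) :
    Function.Bijective
      (fun x : F => b * (b ^ q)⁻¹ * x + b * x ^ q + x ^ (2 * q - 1)) :=
  stmt_9_general n q hq F hcard b hb htr
end

section
/- Let q be a prime power and a, b ∈ F_{q^2}^* with a = b^{1-q}, f(x) = a x + b x^q + x^{2q-1}. If x ∈ F_{q^2} and y = f(x) ≠ 0, then t := b^{-1} x y lies in F_q and satisfies y = t · f(b/y); consequently, for each y ≠ 0 with f(b/y) ≠ 0, the equation f(x) = y has at most one solution x ∈ F_{q^2}. -/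
/-- For `b ∈ F_{q²}*`, `a = b^(1-q)`, `f(x) = a x + b x^q + x^(2q-1)`:
if `y = f(x) ≠ 0`, then `t := b⁻¹ x y` lies in `F_q` (i.e. `t^q = t`) and
`y = t · f(b/y)`; consequently, if moreover `f(b/y) ≠ 0`, then `x` is the unique
solution of `f(x) = y`. -/
theorem stmt_10 (p n q : ℕ) (hp : p.Prime) (hn : 0 < n) (hq : q = p ^ n)
    (F : Type*) [Field F] [Fintype F] (hcard : Fintype.card F = q ^ 2)
    (a b : F) (hb : b ≠ 0) (hab : a = b * (b ^ q)⁻¹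
    ) (f : F → F) (hf : ∀ x : F, f x = a * x + b * x ^ q + x ^ (2 * q - 1))
    (x y : F) (hy : y = f x) (hy0 : y ≠ 0) :
    (b⁻¹ * x * y) ^ q = b⁻¹ * x * y ∧
    y = (b⁻¹ * x * y) * f (b / y) ∧
    (f (b / y) ≠ 0 → ∀ x' : F, f x' = y → x' = x) := by
  haveI : Fact p.Prime := ⟨hp⟩
  have hq2 : 2 ≤ q := by
    rw [hq]
    calc 2 ≤ p := hp.two_le
    _ ≤ p ^ n := Nat.le_self_pow hn.ne' p
  -- characteristic
  haveI hch : CharP F p := by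
    obtain ⟨c, hc⟩ := CharP.exists F
    haveI := hc
    have hcp : c.Prime := CharP.char_is_prime F c
    obtain ⟨m, hm, hcm⟩ := FiniteField.card F c
    have hpc : p = c := by
      have h1 : p ∣ c ^ (m : ℕ) := by
        rw [← hcm, hcard, hq, ← pow_mul]
        exact dvd_pow_self p (by omega : n * 2 ≠ 0)
      exact (Nat.prime_dvd_prime_iff_eq hp hcp).mp (hp.dvd_of_dvd_pow h1)
    rwa [hpc]
  have frob : ∀ u v : F, (u + v) ^ q = u ^ q + v ^ q := by
    intro u v; rw [hq]; exact add_pow_char_pow ..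
  have keyq : ∀ z : F, (z ^ q) ^ q = z := by
    intro z
    rw [← pow_mul, show q * q = Fintype.card F from by rw [hcard]; ring]
    exact FiniteField.pow_card z
  have hbq : b ^ q ≠ 0 := pow_ne_zero _ hb
  have pw : ∀ z : F, z ≠ 0 → z ^ (2 * q - 1) = (z ^ q) ^ 2 * z⁻¹ := by
    intro z hz
    have h1 : z ^ (2 * q - 1) * z = (z ^ q) ^ 2 := by
      rw [← pow_succ, show 2 * q - 1 + 1 = q * 2 from by omega, pow_mul]
    field_simp [← h1]
    exact h1
  -- main lemma for any solution z
  have main : ∀ z : F, f z = y →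
      (b⁻¹ * z * y) ^ q = b⁻¹ * z * y ∧ y = (b⁻¹ * z * y) * f (b / y) := by
    intro z hz
    have hz0 : z ≠ 0 := by
      intro h
      apply hy0
      rw [← hz, h, hf]
      simp [zero_pow, show q ≠ 0 by omega, show 2 * q - 1 ≠ 0 by omega]
    have ht : b⁻¹ * z * y = (b ^ q)⁻¹ * z ^ 2 + z ^ q * z + b⁻¹ * (z ^ q) ^ 2 := by
      rw [← hz, hf, hab, pw z hz0]
      field_simp
    have e1 : ((b ^ q)⁻¹ * z ^ 2) ^ q = b⁻¹ * (z ^ q) ^ 2 := by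
      rw [mul_pow, inv_pow, keyq b, pow_right_comm]
    have e2 : (z ^ q * z) ^ q = z * z ^ q := by rw [mul_pow, keyq z]
    have e3 : (b⁻¹ * (z ^ q) ^ 2) ^ q = (b ^ q)⁻¹ * z ^ 2 := by
      rw [mul_pow, inv_pow, pow_right_comm, keyq z]
    have part1 : (b⁻¹ * z * y) ^ q = b⁻¹ * z * y := by
      rw [ht, frob, frob, e1, e2, e3]; ring
    refine ⟨part1, ?_⟩
    have R : b * (z ^ q * y ^ q) = b ^ q * (z * y) := by
      have h := part1
      rw [mul_pow, mul_pow, inv_pow] at h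
      field_simp at h
      linear_combination h
    have hby : b / y ≠ 0 := div_ne_zero hb hy0
    have hyq : y ^ q ≠ 0 := pow_ne_zero _ hy0
    have hyx : y = b * (b ^ q)⁻¹ * z + b * z ^ q + (z ^ q) ^ 2 * z⁻¹ := by
      rw [← hz, hf, hab, pw z hz0]
    have T1 : (b⁻¹ * z * y) * (b * (b ^ q)⁻¹ * (b / y)) = b * (b ^ q)⁻¹ * z := by
      field_simp
    have T2 : (b⁻¹ * z * y) * (b * (b ^ q / y ^ q)) = b * z ^ q := by
      field_simp
      linear_combination -R
    have T3 : (b⁻¹ * z * y) * ((b ^ q / y ^ q) ^ 2 * (b / y)⁻¹) = (z ^ q) ^ 2 * z⁻¹ := by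
      rw [inv_div]
      field_simp
      linear_combination (-(b * (z ^ q * y ^ q)) - b ^ q * (z * y)) * R
    rw [hf, hab, pw _ hby, div_pow, mul_add, mul_add, T1, T2, T3]
    exact hyx
  refine ⟨(main x hy.symm).1, (main x hy.symm).2, ?_⟩
  intro hfb x' hx'
  have h1 := (main x' hx').2
  have h2 := (main x hy.symm).2
  have h3 : b⁻¹ * x' * y = b⁻¹ * x * y :=
    mul_right_cancel₀ hfb (by rw [← h1, ← h2])
  exact mul_left_cancel₀ (inv_ne_zero hb) (mul_right_cancel₀ hy0 h3)
end

section
/- Let q be an odd prime power and b ∈ F_{q^2}^* with 1 - 4 b^{-(q+1)} a nonzero square of F_q. Then the polynomial x^{2(q-1)} + b x^{q-1} + b^{1-q} has no root in F_{q^2}^*; equivalently, f(x) = b^{1-q} x + b x^q + x^{2q-1} has only the root x = 0 in F_{q^2}. -/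
/-!
Put `y = x ^ (q - 1)`, so that `y ^ (q + 1) = 1`, and write `N u = u ^ (q + 1)` for the norm to
`F_q`. A root `x` makes `y` a root of `Y² + bY + b^(1-q)`, whose discriminant is `(bc)²`; hence
`2y = -b(1 ± c)`. Since `c ∈ F_q`, taking norms gives `4 = N(b)(1 ± c)²`, while the hypothesis on
`c` reads `4 = N(b)(1 - c)(1 + c)`. Subtracting, `2c · N(b)(1 ± c) = 0`, which forces `c = 0`.
-/

theorem pow_sub_one_pow_succ_eq_one {K : Type*} [Field K] [Fintype K] {q : ℕ}
    (hcard : Fintype.card K = q ^ 2) {x : K} (hx : x ≠ 0) : (x ^ (q - 1)) ^ (q + 1) = 1 := by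
  have hexp : (q - 1) * (q + 1) = Fintype.card K - 1 := by
    rw [hcard, mul_comm, ← Nat.sq_sub_sq, one_pow]
  rw [← pow_mul, hexp, FiniteField.pow_card_sub_one_eq_one x hx]

theorem eq_zero_of_two_mul_eq_neg_mul_one_add {F : Type*} [Field F] {p n : ℕ} [Fact p.Prime]
    [CharP F p] (hodd : Odd (p ^ n)) (h2 : (2 : F) ≠ 0) {b c y : F} (hc : c ^ p ^ n = c)
    (hy : y ^ (p ^ n + 1) = 1) (hN : b ^ (p ^ n + 1) * (1 - c ^ 2) = 4)
    (h2y : 2 * y = -(b * (1 + c))) : c = 0 := by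
  have norm_of_fixed : ∀ u : F, u ^ p ^ n = u → u ^ (p ^ n + 1) = u ^ 2 := fun u hu => by
    rw [pow_succ, hu, sq]
  have h2q : (2 : F) ^ p ^ n = 2 := by
    rw [← one_add_one_eq_two, add_pow_char_pow, one_pow]
  have h1c : (1 + c) ^ p ^ n = 1 + c := by rw [add_pow_char_pow, one_pow, hc]
  have hnorm : b ^ (p ^ n + 1) * (1 + c) ^ 2 = 4 := by
    have := congrArg (· ^ (p ^ n + 1)) h2y
    simp only [mul_pow, hy, hodd.add_one.neg_pow, norm_of_fixed 2 h2q,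
      norm_of_fixed _ h1c] at this
    linear_combination -this
  have h4 : (4 : F) ≠ 0 := by
    rw [show (4 : F) = 2 ^ 2 by norm_num]
    exact pow_ne_zero 2 h2
  have hfactor : 2 * c * (b ^ (p ^ n + 1) * (1 + c)) = 0 := by linear_combination hnorm - hN
  have hne : b ^ (p ^ n + 1) * (1 + c) ≠ 0 := fun h => h4 <| by
    rw [← hnorm, sq, ← mul_assoc, h, zero_mul]
  exact (mul_eq_zero.mp ((mul_eq_zero.mp hfactor).resolve_right hne)).resolve_left h2

theorem two_mul_eq_neg_mul_one_add_or_sub {F : Type*} [Field F] [NeZero (2 : F)] {b c e y : F}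
    (hdisc : b ^ 2 - 4 * e = (b * c) ^ 2) (hy : y ^ 2 + b * y + e = 0) :
    2 * y = -(b * (1 + c)) ∨ 2 * y = -(b * (1 - c)) := by
  have hdisc' : discrim 1 b e = b * c * (b * c) := by rw [discrim, mul_one, ← sq, hdisc]
  rcases (quadratic_eq_zero_iff one_ne_zero hdisc' y).mp (by rwa [one_mul, ← sq]) with h | h
  · right
    rw [h]
    field_simp
    ring
  · left
    rw [h]
    field_simp
    ring

theorem stmt_12_general (p n q : ℕ) (hp : p.Prime) (hq : q = p ^ n)
    (hodd : Odd q)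
    (F : Type*) [Field F] [Fintype F] (hcard : Fintype.card F = q ^ 2)
    (b : F) (hb : b ≠ 0)
    (hsq : ∃ c : F, c ≠ 0 ∧ c ^ q = c ∧ c ^ 2 = 1 - 4 * (b ^ (q + 1))⁻¹) :
    ∀ x : F, x ≠ 0 → x ^ (2 * (q - 1)) + b * x ^ (q - 1) + b * (b ^ q)⁻¹ ≠ 0 := by
  intro x hx hroot
  obtain ⟨c, hc0, hcq, hc2⟩ := hsq
  have : Fact p.Prime := ⟨hp⟩
  have : CharP F p := charP_of_card_eq_prime_pow (hcard.trans (by rw [hq, ← pow_mul]))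
  have h2 : (2 : F) ≠ 0 := Ring.two_ne_zero fun h => by
    have := FiniteField.even_card_iff_char_two.mp h
    rw [hcard, Nat.odd_iff.mp hodd.pow] at this
    exact one_ne_zero this
  have : NeZero (2 : F) := ⟨h2⟩
  subst hq
  have hy := pow_sub_one_pow_succ_eq_one hcard hx
  have hN : b ^ (p ^ n + 1) * (1 - c ^ 2) = 4 := by
    rw [hc2]
    field_simp
    ring
  have hdisc : b ^ 2 - 4 * (b * (b ^ p ^ n)⁻¹) = (b * c) ^ 2 := by
    rw [mul_pow, hc2, pow_succ]
    field_simp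
    ring
  rw [mul_comm, pow_mul] at hroot
  rcases two_mul_eq_neg_mul_one_add_or_sub hdisc hroot with h | h
  · exact hc0 (eq_zero_of_two_mul_eq_neg_mul_one_add hodd h2 hcq hy hN h)
  · have hcq' : (-c) ^ p ^ n = -c := by rw [hodd.neg_pow, hcq]
    exact hc0 <| neg_eq_zero.mp <| eq_zero_of_two_mul_eq_neg_mul_one_add hodd h2 hcq' hy
      (by rwa [neg_sq]) (by rw [h, sub_eq_add_neg])

/-- For odd prime power `q` and `b ∈ F_{q²}*` such that `1 - 4 b^(-(q+1))` is a
nonzero square of `F_q`, the polynomial `x^(2(q-1)) + b x^(q-1) + b^(1-q)` has no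
root in `F_{q²}*`. -/
theorem stmt_12 (p n q : ℕ) (hp : p.Prime) (hn : 0 < n) (hq : q = p ^ n)
    (hodd : Odd q)
    (F : Type*) [Field F] [Fintype F] (hcard : Fintype.card F = q ^ 2)
    (b : F) (hb : b ≠ 0)
    (hsq : ∃ c : F, c ≠ 0 ∧ c ^ q = c ∧ c ^ 2 = 1 - 4 * (b ^ (q + 1))⁻¹) :
    ∀ x : F, x ≠ 0 → x ^ (2 * (q - 1)) + b * x ^ (q - 1) + b * (b ^ q)⁻¹ ≠ 0 :=
  stmt_12_general p n q hp hq hodd F hcard b hb hsq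
end

section
/- Let q be even and b ∈ F_{q^2}^* with Tr_{F_q/F_2}(b^{-(q+1)}) = 0. Then the polynomial x^{2(q-1)} + b x^{q-1} + b^{1-q} has no root in F_{q^2}^*. -/
/-- For `q = 2ⁿ` and `b ∈ F_{q²}*` with `Tr_{F_q/F_2}(b^(-(q+1))) = 0`, the
polynomial `x^(2(q-1)) + b x^(q-1) + b^(1-q)` has no root in `F_{q²}*`. -/
theorem stmt_13 (n q : ℕ) (hn : 0 < n) (hq : q = 2 ^ n)
    (F : Type*) [Field F] [Fintype F] (hcard : Fintype.card F = q ^ 2)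
    (b : F) (hb : b ≠ 0)
    (htr : ∑ i ∈ Finset.range n, ((b ^ (q + 1))⁻¹) ^ (2 ^ i) = 0) :
    ∀ x : F, x ≠ 0 → x ^ (2 * (q - 1)) + b * x ^ (q - 1) + b * (b ^ q)⁻¹ ≠ 0 := by
  -- characteristic 2
  obtain ⟨p, hp⟩ := CharP.exists F
  haveI := hp
  have hpprime : p.Prime := CharP.char_is_prime F p
  obtain ⟨m, -, hm⟩ := FiniteField.card F p
  have hp2 : p = 2 := by
    have hdvd : p ∣ 2 ^ (n * 2) := by
      rw [pow_mul, ← hq, ← hcard, hm]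
      exact dvd_pow_self p m.pos.ne'
    exact (Nat.prime_dvd_prime_iff_eq hpprime Nat.prime_two).mp
      (hpprime.dvd_of_dvd_pow hdvd)
  subst hp2
  haveI : CharP F 2 := hp
  have hq1 : 1 ≤ q := by rw [hq]; exact Nat.one_le_two_pow
  intro x hx h
  set y : F := x ^ (q - 1) with hy
  have hyne : y ≠ 0 := pow_ne_zero _ hx
  have heq : y ^ 2 + b * y + b * (b ^ q)⁻¹ = 0 := by
    rw [hy, ← pow_mul, mul_comm (q-1) 2]; exact h
  set c : F := (b ^ (q + 1))⁻¹ with hc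
  set z : F := y * b⁻¹ with hz
  have hbq : (b : F) ^ q ≠ 0 := pow_ne_zero _ hb
  have hzeq : z ^ 2 + z + c = 0 := by
    have hstep : z ^ 2 + z + c = (y ^ 2 + b * y + b * (b ^ q)⁻¹) * (b⁻¹ * b⁻¹) := by
      rw [hz, hc]; field_simp; ring
    rw [hstep, heq, zero_mul]
  have hzsq : z ^ 2 = z + c := by
    linear_combination hzeq - CharTwo.add_self_eq_zero (z + c)
  -- iterate Frobenius
  have key : ∀ k : ℕ, z ^ 2 ^ k = z + ∑ i ∈ Finset.range k, c ^ 2 ^ i := by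
    intro k
    induction k with
    | zero => simp
    | succ k ih =>
      rw [pow_succ, pow_mul, ih, CharTwo.add_sq, hzsq, CharTwo.sum_sq,
        Finset.sum_range_succ']
      have hcc : ∀ i, (c ^ 2 ^ i) ^ 2 = c ^ 2 ^ (i + 1) := by
        intro i; rw [← pow_mul, ← pow_succ]
      simp_rw [hcc]
      ring
  have hzq : z ^ q = z := by
    rw [hq, key n, htr, add_zero]
  -- y^(q+1) = 1
  have hxcard : x ^ (q ^ 2 - 1) = 1 := by
    rw [← hcard]; exact FiniteField.pow_card_sub_one_eq_one x hx
  have hyq1 : y ^ (q + 1) = 1 := by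
    rw [hy, ← pow_mul]
    have hqq : (q - 1) * (q + 1) = q ^ 2 - 1 := by
      have hq1sq : 1 ≤ q ^ 2 := Nat.one_le_pow _ _ hq1
      zify [hq1, hq1sq]; ring
    rw [hqq, hxcard]
  have hyz : y = b * z := by
    rw [hz]; field_simp
  clear_value y c z
  -- b^(q+1) z^2 = 1
  have hbz : b ^ (q + 1) * z ^ 2 = 1 := by
    have h1 : (b * z) ^ (q + 1) = 1 := by rw [← hyz]; exact hyq1
    rw [mul_pow] at h1
    have h2 : z ^ (q + 1) = z ^ 2 := by rw [pow_succ, hzq, sq]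
    rw [h2] at h1; exact h1
  have hz2c : z ^ 2 = c := by
    rw [hc]; exact (inv_eq_of_mul_eq_one_right hbz).symm
  have hzzero : z = 0 := by
    have h3 : z + c = c := by rw [← hzsq, hz2c]
    have := CharTwo.add_self_eq_zero (R := F) c
    linear_combination h3
  exact hyne (by rw [hyz, hzzero, mul_zero])
end

section
/- Let q be an odd prime power and a, b ∈ F_{q^2} with ab(a - b^{1-q}) ≠ 0, 1 - 4a/b^2 a nonzero square of F_q (in particular a/b^2 ∈ F_q), and b^2 - a^2 b^{q-1} - 3a = 0. Then a + b + 1 ≠ 0. -/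
/-!
Suppose `a + b + 1 = 0` and put `u = a / b²`, which is fixed by the `q`-Frobenius. Then `b` is a
root of `u X² + X + 1`, whose discriminant `1 - 4u = c²` has its square root `c` in `F_q`, so
`b = (±c - 1) / 2u` lies in `F_q` as well. Hence `b^(q-1) = 1`, and the remaining two equations
force `b = -2`, `a = 1`, so that `1 - 4a/b² = 0`, contradicting `c ≠ 0`.
-/

theorem FiniteField.two_ne_zero_of_odd_card {F : Type*} [Field F] [Fintype F]
    (h : Odd (Fintype.card F)) : (2 : F) ≠ 0 :=
  Ring.two_ne_zero fun hchar ↦ by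
    have := FiniteField.even_card_iff_char_two.mp hchar
    rw [Nat.odd_iff] at h
    omega

theorem RingHom.map_eq_self_of_mul_sq_add_add_one_eq_zero {F : Type*} [Field F] (φ : F →+* F)
    {u b c : F} (h2 : (2 : F) ≠ 0) (hu : u ≠ 0) (hφu : φ u = u) (hφc : φ c = c)
    (hc : c ^ 2 = 1 - 4 * u) (hb : u * b ^ 2 + b + 1 = 0) : φ b = b := by
  have hsq : (2 * u * b + 1) ^ 2 = c ^ 2 := by linear_combination 4 * u * hb - hc
  have hfix : φ (2 * u * b + 1) = 2 * u * b + 1 := by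
    rcases sq_eq_sq_iff_eq_or_eq_neg.mp hsq with h | h <;> simp [h, hφc]
  rw [map_add, map_mul, map_mul, map_ofNat, map_one, hφu] at hfix
  exact mul_left_cancel₀ (mul_ne_zero h2 hu) (add_right_cancel hfix)

theorem one_sub_four_mul_div_sq_eq_zero {F : Type*} [Field F] (h2 : (2 : F) ≠ 0) {a b : F}
    (h : a + b + 1 = 0) (heq : b ^ 2 - a ^ 2 - 3 * a = 0) : 1 - 4 * a / b ^ 2 = 0 := by
  have hb : b = -2 := by linear_combination heq + (a - b + 2) * h
  have ha : a = 1 := by linear_combination h - hb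
  have h4 : (4 : F) ≠ 0 := by simpa [show (4 : F) = 2 ^ 2 by norm_num] using h2
  rw [ha, hb, show (-2 : F) ^ 2 = 4 by norm_num, mul_one, div_self h4, sub_self]

theorem stmt_14_general (p n q : ℕ) (hp : p.Prime) (hq : q = p ^ n)
    (hodd : Odd q)
    (F : Type*) [Field F] [Fintype F] (hcard : Fintype.card F = q ^ 2)
    (a b : F) (ha : a ≠ 0) (hb : b ≠ 0)
    (he : (a / b ^ 2) ^ q = a / b ^ 2)
    (hsq : ∃ c : F, c ≠ 0 ∧ c ^ q = c ∧ c ^ 2 = 1 - 4 * a / b ^ 2)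
    (heq : b ^ 2 - a ^ 2 * b ^ (q - 1) - 3 * a = 0) :
    a + b + 1 ≠ 0 := by
  intro h
  obtain ⟨c, hc0, hcq, hc2⟩ := hsq
  have : Fact p.Prime := ⟨hp⟩
  have : CharP F p := charP_of_card_eq_prime_pow (f := n * 2) (by rw [hcard, hq, pow_mul])
  have h2 : (2 : F) ≠ 0 := FiniteField.two_ne_zero_of_odd_card (hcard ▸ hodd.pow)
  have hb2 : b ^ 2 ≠ 0 := pow_ne_zero 2 hb
  have hbq : b ^ q = b := by
    subst hq
    refine (iterateFrobenius F p n).map_eq_self_of_mul_sq_add_add_one_eq_zero h2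
      (div_ne_zero ha hb2) he hcq (by rw [hc2, mul_div_assoc]) ?_
    rw [div_mul_cancel₀ a hb2]
    exact h
  have hb1 : b ^ (q - 1) = 1 := by rw [pow_sub₀ b hb hodd.pos, pow_one, hbq, mul_inv_cancel₀ hb]
  rw [hb1, mul_one] at heq
  have hc20 : c ^ 2 = 0 := hc2.trans (one_sub_four_mul_div_sq_eq_zero h2 h heq)
  exact hc0 (pow_eq_zero_iff two_ne_zero |>.mp hc20)

/-- For odd prime power `q` and `a, b ∈ F_{q²}` with `ab(a - b^(1-q)) ≠ 0`,
`a/b² ∈ F_q` with `1 - 4a/b²` a nonzero square of `F_q`, and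
`b² - a² b^(q-1) - 3a = 0`, we have `a + b + 1 ≠ 0`. -/
theorem stmt_14 (p n q : ℕ) (hp : p.Prime) (hn : 0 < n) (hq : q = p ^ n)
    (hodd : Odd q)
    (F : Type*) [Field F] [Fintype F] (hcard : Fintype.card F = q ^ 2)
    (a b : F) (ha : a ≠ 0) (hb : b ≠ 0) (hab : a ≠ b * (b ^ q)⁻¹)
    (he : (a / b ^ 2) ^ q = a / b ^ 2)
    (hsq : ∃ c : F, c ≠ 0 ∧ c ^ q = c ∧ c ^ 2 = 1 - 4 * a / b ^ 2)
    (heq : b ^ 2 - a ^ 2 * b ^ (q - 1) - 3 * a = 0) :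
    a + b + 1 ≠ 0 :=
  stmt_14_general p n q hp hq hodd F hcard a b ha hb he hsq heq
end

section
/- Let q be even and a, b ∈ F_{q^2} with ab(a - b^{1-q}) ≠ 0, a/b^2 ∈ F_q, Tr_{F_q/F_2}(a/b^2) = 0, and b^2 + a^2 b^{q-1} + a = 0. Then a + b + 1 ≠ 0. -/
/-!
In characteristic 2, `a + b + 1 = 0 ↔ a = b + 1`, and then `a / b² = s + s²` with `s = b⁻¹`.
The absolute trace of `s + s²` telescopes to `s + s^q`, so the trace condition forces `b ∈ F_q`,
i.e. `b^(q-1) = 1`; the defining equation then collapses to `b = 0`.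
-/

open Finset

namespace CharTwo

variable {R : Type*} [CommRing R] [CharP R 2]

theorem sum_range_add_sq_pow_two_pow (s : R) (n : ℕ) :
    ∑ i ∈ range n, (s + s ^ 2) ^ 2 ^ i = s + s ^ 2 ^ n := by
  induction n with
  | zero => simp [add_self_eq_zero]
  | succ n ih =>
    rw [sum_range_succ, ih, add_pow_char_pow, ← pow_mul, ← pow_succ', ← add_assoc,
      add_assoc s, add_self_eq_zero, add_zero]

end CharTwo

theorem stmt_15_general (n q : ℕ) (hq : q = 2 ^ n)
    (F : Type*) [Field F] [Fintype F] (hcard : Fintype.card F = q ^ 2)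
    (a b : F) (hb : b ≠ 0)
    (htr : ∑ i ∈ Finset.range n, (a / b ^ 2) ^ (2 ^ i) = 0)
    (heq : b ^ 2 + a ^ 2 * b ^ (q - 1) + a = 0) :
    a + b + 1 ≠ 0 := by
  intro h
  have : CharP F 2 := charP_of_card_eq_prime_pow (f := n * 2) (by rw [hcard, hq, pow_mul])
  have ha : a = b + 1 := CharTwo.add_eq_zero.mp (by rwa [← add_assoc])
  have hratio : a / b ^ 2 = b⁻¹ + b⁻¹ ^ 2 := by
    field_simp
    rw [ha, add_comm]
  have hbq : b ^ q = b := by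
    rwa [hratio, CharTwo.sum_range_add_sq_pow_two_pow, ← hq, CharTwo.add_eq_zero, eq_comm, inv_pow,
      inv_inj] at htr
  have hbq1 : b ^ (q - 1) = 1 := by
    rw [pow_sub₀ b hb (hq ▸ Nat.one_le_two_pow), hbq, pow_one, mul_inv_cancel₀ hb]
  rw [hbq1, mul_one, ha, CharTwo.add_sq, one_pow] at heq
  apply hb
  linear_combination heq - (b ^ 2 + 1) * CharTwo.two_eq_zero (R := F)

/-- For `q = 2ⁿ` and `a, b ∈ F_{q²}` with `ab(a - b^(1-q)) ≠ 0`, `a/b² ∈ F_q`,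
`Tr_{F_q/F_2}(a/b²) = 0`, and `b² + a² b^(q-1) + a = 0`, we have `a + b + 1 ≠ 0`. -/
theorem stmt_15 (n q : ℕ) (hn : 0 < n) (hq : q = 2 ^ n)
    (F : Type*) [Field F] [Fintype F] (hcard : Fintype.card F = q ^ 2)
    (a b : F) (ha : a ≠ 0) (hb : b ≠ 0) (hab : a ≠ b * (b ^ q)⁻¹)
    (he : (a / b ^ 2) ^ q = a / b ^ 2)
    (htr : ∑ i ∈ Finset.range n, (a / b ^ 2) ^ (2 ^ i) = 0)
    (heq : b ^ 2 + a ^ 2 * b ^ (q - 1) + a = 0) :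
    a + b + 1 ≠ 0 :=
  stmt_15_general n q hq F hcard a b hb htr heq
end

section
/- Let q be even and a, b ∈ F_{q^2}^* with z := a/b^2 ∈ F_q, z ≠ 0. If 1 + a^2 b^{2q-2} + b^{q+1} = 0, then f(x) = a x + b x^q + x^{2q-1} has the nonzero root x = b^{-1/2} in F_{q^2}, hence f is not a permutation polynomial of F_{q^2}. -/
/-- For `q = 2ⁿ` and `a, b ∈ F_{q²}*` with `a/b² ∈ F_q`, if
`1 + a² b^(2q-2) + b^(q+1) = 0` then `f(x) = a x + b x^q + x^(2q-1)` has a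
nonzero root `x` with `x² = b⁻¹` (the square root of `b⁻¹`), hence `f` is not a
permutation polynomial of `F_{q²}`. -/
theorem stmt_17 (n q : ℕ) (hn : 0 < n) (hq : q = 2 ^ n)
    (F : Type*) [Field F] [Fintype F] (hcard : Fintype.card F = q ^ 2)
    (a b : F) (ha : a ≠ 0) (hb : b ≠ 0)
    (he : (a / b ^ 2) ^ q = a / b ^ 2)
    (heq : 1 + a ^ 2 * b ^ (2 * q - 2) + b ^ (q + 1) = 0) :
    (∃ x : F, x ≠ 0 ∧ x ^ 2 = b⁻¹ ∧
        a * x + b * x ^ q + x ^ (2 * q - 1) = 0) ∧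
    ¬ Function.Bijective (fun x : F => a * x + b * x ^ q + x ^ (2 * q - 1)) := by
  -- q ≥ 2
  have hq1 : 1 ≤ q := by subst hq; exact Nat.one_le_two_pow
  -- characteristic 2
  have hchar : ringChar F = 2 := by
    obtain ⟨m, hp, hc⟩ := FiniteField.card F (ringChar F)
    have h2n : (ringChar F) ^ (m : ℕ) = 2 ^ (n * 2) := by
      rw [← hc, hcard, hq, ← pow_mul]
    have hdvd : ringChar F ∣ 2 ^ (n * 2) := h2n ▸ dvd_pow_self (ringChar F) m.ne_zero
    have := Nat.Prime.dvd_of_dvd_pow hp hdvd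
    exact (Nat.prime_dvd_prime_iff_eq hp Nat.prime_two).mp this
  haveI : CharP F 2 := by rw [← hchar]; exact ringChar.charP F
  have hfrob : Function.Bijective (frobenius F 2) :=
    (Finite.injective_iff_bijective).mp (frobenius_inj F 2)
  obtain ⟨x, hx2⟩ := hfrob.surjective b⁻¹
  simp only [frobenius_def] at hx2
  have hbinv : (b : F)⁻¹ ≠ 0 := inv_ne_zero hb
  have hx0 : x ≠ 0 := by rintro rfl; rw [zero_pow (by norm_num)] at hx2; exact hbinv hx2.symm
  -- key root equation
  have hu2 : (x ^ (q + 1)) ^ 2 = (b⁻¹) ^ (q + 1) := by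
    rw [← pow_mul, mul_comm, pow_mul, hx2]
  have sq2 : ∀ s t : F, (s + t) ^ 2 = s ^ 2 + t ^ 2 := fun s t =>
    CharTwo.add_sq s t
  set v : F := a * b ^ q * b⁻¹ with hv
  set w : F := b ^ (q + 1) * x ^ (q + 1) with hw
  have hv2 : v ^ 2 = a ^ 2 * b ^ (2 * q - 2) := by
    have h1 : b ^ (2 * q - 2) * b ^ 2 = b ^ (2 * q) := by
      rw [← pow_add, Nat.sub_add_cancel (by omega)]
    have h2 : (b ^ 2 : F) ≠ 0 := pow_ne_zero _ hb
    rw [hv]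
    apply mul_right_cancel₀ h2
    rw [mul_assoc (a ^ 2), h1, mul_pow, mul_pow, inv_pow, mul_assoc,
      inv_mul_cancel₀ h2, mul_one, ← pow_mul, mul_comm q 2]
  have hw2 : w ^ 2 = b ^ (q + 1) := by
    rw [hw, mul_pow, hu2, inv_pow, sq, mul_assoc,
      mul_inv_cancel₀ (pow_ne_zero _ hb), mul_one]
  have hkey : v + w + 1 = 0 := by
    have hsq : (v + w + 1) ^ 2 = 0 := by
      rw [sq2, sq2, hv2, hw2, one_pow]
      linear_combination heq
    exact pow_eq_zero_iff (by norm_num) |>.mp hsq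
  have hroot : a * x + b * x ^ q + x ^ (2 * q - 1) = 0 := by
    have hbqx : b ^ q * x ≠ 0 := mul_ne_zero (pow_ne_zero _ hb) hx0
    apply mul_left_cancel₀ hbqx
    rw [mul_zero]
    have e1 : x ^ (2 * q - 1) * x = x ^ (2 * q) := by
      rw [← pow_succ, Nat.sub_add_cancel (by omega)]
    have e2 : x ^ (2 * q) = (b⁻¹) ^ q := by rw [pow_mul, hx2]
    calc b ^ q * x * (a * x + b * x ^ q + x ^ (2 * q - 1))
        = a * b ^ q * x ^ 2 + b ^ (q + 1) * x ^ (q + 1) + b ^ q * (x ^ (2*q-1) * x) := by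
          ring
      _ = a * b ^ q * b⁻¹ + w + b ^ q * (b⁻¹) ^ q := by rw [hx2, e1, e2, hw]
      _ = v + w + 1 := by rw [hv, inv_pow, mul_inv_cancel₀ (pow_ne_zero _ hb)]
      _ = 0 := hkey
  refine ⟨⟨x, hx0, hx2, hroot⟩, fun hB => ?_⟩
  apply hx0
  apply hB.injective
  show a * x + b * x ^ q + x ^ (2 * q - 1)
      = a * 0 + b * (0:F) ^ q + (0:F) ^ (2 * q - 1)
  rw [hroot, zero_pow (by omega : q ≠ 0), zero_pow (by omega : 2 * q - 1 ≠ 0)]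
  ring
end

section
/- Let q be a prime power, a, b ∈ F_{q^2} with a + b + 1 ≠ 0, x ∈ F_{q^2}, and suppose f(x)/(a+b+1) ∈ F_q where f(x) = a x + b x^q + x^{2q-1} and x ∉ F_q. Then (a+b+1)^q x^{2(q-1)} + [(b+1)^{q+1} - a^{q+1}] x^{q-1} + (a+b+1) = 0. -/
/-- Let `a, b ∈ F_{q²}` with `a + b + 1 ≠ 0`, and let `x ∈ F_{q²} \ F_q` with
`f(x)/(a+b+1) ∈ F_q`, where `f(x) = a x + b x^q + x^(2q-1)`. Then
`(a+b+1)^q x^(2(q-1)) + [(b+1)^(q+1) - a^(q+1)] x^(q-1) + (a+b+1) = 0`. -/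
theorem stmt_18 (p n q : ℕ) (hp : p.Prime) (hn : 0 < n) (hq : q = p ^ n)
    (F : Type*) [Field F] [Fintype F] (hcard : Fintype.card F = q ^ 2)
    (a b : F) (habc : a + b + 1 ≠ 0)
    (x : F) (hx : x ^ q ≠ x)
    (hfx : ((a * x + b * x ^ q + x ^ (2 * q - 1)) / (a + b + 1)) ^ q
            = (a * x + b * x ^ q + x ^ (2 * q - 1)) / (a + b + 1)) :
    (a + b + 1) ^ q * x ^ (2 * (q - 1))
      + ((b + 1) ^ (q + 1) - a ^ (q + 1)) * x ^ (q - 1) + (a + b + 1) = 0 := by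
  -- basic facts
  have hq1 : 1 ≤ q := by
    subst hq; exact Nat.one_le_pow _ _ hp.pos
  have hx0 : x ≠ 0 := by
    intro h
    apply hx
    rw [h, zero_pow (by omega)]
  -- characteristic of F is p
  haveI hfp : Fact p.Prime := ⟨hp⟩
  have hrC : CharP F (ringChar F) := ringChar.charP F
  obtain ⟨m, hrp, hcard'⟩ := FiniteField.card F (ringChar F)
  haveI : CharP F p := by
    have hdvd : p ∣ ringChar F ^ (m : ℕ) := by
      rw [← hcard', hcard, hq, ← pow_mul]
      exact dvd_pow_self p (by positivity)
    have := (Nat.Prime.dvd_of_dvd_pow hp hdvd)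
    have hpr : p = ringChar F :=
      ((Nat.prime_dvd_prime_iff_eq hp hrp).mp this)
    rwa [hpr]
  -- Frobenius is additive for q-th powers
  have hfrob : ∀ u v : F, (u + v) ^ q = u ^ q + v ^ q := by
    intro u v; rw [hq]; exact add_pow_char_pow u v p n
  -- x^(q*q) = x
  have hq2 : (x ^ q) ^ q = x := by
    rw [← pow_mul, ← sq, ← hcard]
    exact FiniteField.pow_card x
  -- x^(2q-1) * x = (x^q)^2
  have h21 : x ^ (2 * q - 1) * x = (x ^ q) ^ 2 := by
    rw [← pow_succ, ← pow_mul]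
    congr 1
    omega
  -- (x^(2q-1))^q * x^q = x^2
  have h3 : (x ^ (2 * q - 1)) ^ q * x ^ q = x ^ 2 := by
    rw [← mul_pow, h21, ← pow_mul, mul_comm 2 q, pow_mul, hq2]
  -- x^(q-1) * x = x^q
  have hu : x ^ (q - 1) * x = x ^ q := by
    rw [← pow_succ]
    congr 1
    omega
  -- Frobenius identities on coefficients
  have hcq : (a + b + 1) ^ q = a ^ q + b ^ q + 1 := by
    rw [hfrob, hfrob, one_pow]
  have hb1 : (b + 1) ^ (q + 1) = (b ^ q + 1) * (b + 1) := by
    rw [pow_succ, hfrob, one_pow]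
  have ha1 : a ^ (q + 1) = a ^ q * a := pow_succ a q
  have hpow2 : x ^ (2 * (q - 1)) = (x ^ (q - 1)) ^ 2 := by
    rw [← pow_mul, mul_comm]
  -- cross-multiplied hypothesis
  have hcq0 : (a + b + 1) ^ q ≠ 0 := pow_ne_zero _ habc
  have hE : (a ^ q * x ^ q + b ^ q * x + (x ^ (2 * q - 1)) ^ q) * (a + b + 1)
      = (a * x + b * x ^ q + x ^ (2 * q - 1)) * (a + b + 1) ^ q := by
    have h := hfx
    rw [div_pow, div_eq_div_iff hcq0 habc] at h
    calc (a ^ q * x ^ q + b ^ q * x + (x ^ (2 * q - 1)) ^ q) * (a + b + 1)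
        = (a * x + b * x ^ q + x ^ (2 * q - 1)) ^ q * (a + b + 1) := by
          rw [hfrob, hfrob, mul_pow, mul_pow, hq2]
      _ = (a * x + b * x ^ q + x ^ (2 * q - 1)) * (a + b + 1) ^ q := h
  -- rewrite the goal
  rw [hcq, hb1, ha1, hpow2]
  rw [hcq] at hE
  -- the key identity
  have key : ((x ^ q - x) * x ^ 2) *
      ((a ^ q + b ^ q + 1) * (x ^ (q - 1)) ^ 2
        + ((b ^ q + 1) * (b + 1) - a ^ q * a) * x ^ (q - 1) + (a + b + 1)) = 0 := by
    linear_combination (-(x * x ^ q)) * hE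
      + (-((a ^ q + b ^ q + 1) * x ^ q)) * h21
      + ((a + b + 1) * x) * h3
      + ((a ^ q + b ^ q + 1) * (x ^ q - x) * (x ^ (q - 1) * x + x ^ q)
          + ((b ^ q + 1) * (b + 1) - a ^ q * a) * (x ^ q - x) * x) * hu
  have hnz : (x ^ q - x) * x ^ 2 ≠ 0 :=
    mul_ne_zero (sub_ne_zero.mpr hx) (pow_ne_zero 2 hx0)
  exact (mul_eq_zero.mp key).resolve_left hnz
end
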